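/- arXiv:2304.13340 — 9 statements merged into one kernel-verified Lean document; each statement's English description precedes it below -/
import Mathlib

section
/- Let A be a C*-algebra and L : A_sa → [0,∞] an extended seminorm on the self-adjoint part A_sa of A such that the set {b ∈ A_sa : L(b) < ∞} is norm dense in A_sa. If (φ_n) is a sequence of states on A and φ is a state on A with d_L(φ_n, φ) → 0, then φ_n converges to φ in the weak-* topology, i.e. φ_n(a) → φ(a) for every a ∈ A. -/
open Filter Topology
open scoped ComplexOrder ENNReal NNReal MultiplierAlgebra

noncomputable section

/-- A *state* on a C⋆-algebra: a continuous linear functional into `ℂ` that is nonnegative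
on nonnegative elements and has norm `1`. -/
def IsState {E : Type*} [NormedAddCommGroup E] [NormedSpace ℂ E] [PartialOrder E]
    (φ : E →L[ℂ] ℂ) : Prop :=
  (∀ a : E, 0 ≤ a → 0 ≤ φ a) ∧ ‖φ‖ = 1

variable {A : Type*} [NonUnitalCStarAlgebra A] [PartialOrder A] [StarOrderedRing A]

/-- `L` is an extended seminorm on the self-adjoint part `A_sa` of `A`:
`L (t • b) = |t| * L b` for real `t`, and `L (b + b') ≤ L b + L b'`. -/
def IsESeminorm (L : selfAdjoint A → ℝ≥0∞) : Prop :=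
  (∀ (t : ℝ) (b : selfAdjoint A), L (t • b) = (‖t‖₊ : ℝ≥0∞) * L b) ∧
    ∀ b b' : selfAdjoint A, L (b + b') ≤ L b + L b'

/-- The spectral distance `d_L(φ, ψ) = sup { |φ b - ψ b| : b ∈ A_sa, L b ≤ 1 }`,
valued in `[0, ∞]`. -/
def dL (L : selfAdjoint A → ℝ≥0∞) (φ ψ : A → ℂ) : ℝ≥0∞ :=
  ⨆ b : {b : selfAdjoint A // L b ≤ 1}, (‖φ (b.1 : A) - ψ (b.1 : A)‖₊ : ℝ≥0∞)

/-- An approximate identity for `A`: a net `(I n)` with `0 ≤ I n`, `‖I n‖ ≤ 1`, and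
`‖I n * a - a‖ → 0`, `‖a * I n - a‖ → 0` for every `a : A`. -/
def IsApproxUnit {ι : Type*} [Preorder ι] (I : ι → A) : Prop :=
  (∀ n, 0 ≤ I n) ∧ (∀ n, ‖I n‖ ≤ 1) ∧
    ∀ a : A, Tendsto (fun n => ‖I n * a - a‖) atTop (𝓝 0) ∧
      Tendsto (fun n => ‖a * I n - a‖) atTop (𝓝 0)

/-! Scaling `b` down by `r ≥ L b` puts it in the unit ball of `L`, so
`|φₙ(b) - φ(b)| ≤ r · d_L(φₙ, φ)` and `φₙ → φ` pointwise on the dense set `{L < ∞}`. States have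
norm one, so the `φₙ` are equicontinuous and the set where `φₙ(a) → φ(a)` is closed; it thus
contains `A_sa`, and then all of `A = A_sa + i A_sa`. -/

section

variable {ι : Type*} {l : Filter ι}

theorem ContinuousLinearMap.isClosed_setOf_tendsto_of_nnnorm_le {𝕜 E F : Type*}
    [NontriviallyNormedField 𝕜] [SeminormedAddCommGroup E] [NormedSpace 𝕜 E]
    [SeminormedAddCommGroup F] [NormedSpace 𝕜 F] {ψs : ι → E →L[𝕜] F} {C : ℝ≥0}
    (hψs : ∀ i, ‖ψs i‖₊ ≤ C) (ψ : E →L[𝕜] F) :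
    IsClosed {a | Tendsto (fun i => ψs i a) l (𝓝 (ψ a))} :=
  (LipschitzWith.uniformEquicontinuous (fun i => ⇑(ψs i)) C fun i =>
    (ψs i).lipschitz.weaken (hψs i)).equicontinuous.isClosed_setOfPred_tendsto ψ.continuous

theorem tendsto_apply_of_forall_selfAdjoint {E G : Type*} [AddCommGroup E] [Module ℂ E]
    [StarAddMonoid E] [StarModule ℂ E] [FunLike G E ℂ] [LinearMapClass G ℂ E ℂ]
    {ψs : ι → G} {ψ : G} (h : ∀ b : selfAdjoint E, Tendsto (fun i => ψs i b) l (𝓝 (ψ b)))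
    (a : E) : Tendsto (fun i => ψs i a) l (𝓝 (ψ a)) := by
  rw [← realPart_add_I_smul_imaginaryPart a]
  simp only [map_add, map_smul, smul_eq_mul]
  exact (h _).add ((h _).const_mul _)

variable {B : Type*} [NonUnitalCStarAlgebra B] {L : selfAdjoint B → ℝ≥0∞}

theorem edist_le_mul_dL (hL : IsESeminorm L) (φ ψ : B →L[ℂ] ℂ) {b : selfAdjoint B} {r : ℝ≥0}
    (hr : r ≠ 0) (hb : L b ≤ r) : edist (φ b) (ψ b) ≤ r * dL L φ ψ := by
  set c : selfAdjoint B := (r⁻¹ : ℝ) • b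
  have hr' : (r : ℝ≥0∞) ≠ 0 := ENNReal.coe_ne_zero.2 hr
  have hc : L c ≤ 1 := by
    rw [hL.1, nnnorm_inv, NNReal.nnnorm_eq, ENNReal.coe_inv hr]
    calc (r : ℝ≥0∞)⁻¹ * L b ≤ (r : ℝ≥0∞)⁻¹ * r := by gcongr
      _ = 1 := ENNReal.inv_mul_cancel hr' ENNReal.coe_ne_top
  have hcdL : edist (φ c) (ψ c) ≤ dL L φ ψ :=
    (edist_eq_enorm_sub _ _).trans_le <|
      le_iSup (fun c : {c : selfAdjoint B // L c ≤ 1} => (‖φ c.1 - ψ c.1‖₊ : ℝ≥0∞)) ⟨c, hc⟩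
  calc edist (φ b) (ψ b) = r * edist (φ c) (ψ c) := by
        simp only [c, selfAdjoint.val_smul, ContinuousLinearMap.map_smul_of_tower, edist_smul₀]
        rw [nnnorm_inv, NNReal.nnnorm_eq, ENNReal.smul_def, smul_eq_mul, ← mul_assoc,
          ENNReal.coe_inv hr, ENNReal.mul_inv_cancel hr' ENNReal.coe_ne_top, one_mul]
    _ ≤ r * dL L φ ψ := by gcongr

theorem tendsto_apply_of_tendsto_dL (hL : IsESeminorm L) {φs : ι → B →L[ℂ] ℂ}
    {φ : B →L[ℂ] ℂ} (hconv : Tendsto (fun i => dL L (φs i) φ) l (𝓝 0))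
    {b : selfAdjoint B} (hb : L b < ⊤) : Tendsto (fun i => φs i b) l (𝓝 (φ b)) := by
  set r : ℝ≥0 := (L b).toNNReal + 1
  have hbr : L b ≤ r := by
    rw [← ENNReal.coe_toNNReal hb.ne, ENNReal.coe_le_coe]
    exact le_add_of_nonneg_right zero_le_one
  have hmul : Tendsto (fun i => (r : ℝ≥0∞) * dL L (φs i) φ) l (𝓝 0) := by
    simpa using ENNReal.Tendsto.const_mul hconv (Or.inr ENNReal.coe_ne_top)
  rw [tendsto_iff_edist_tendsto_0]
  exact tendsto_of_tendsto_of_tendsto_of_le_of_le tendsto_const_nhds hmul (fun _ => zero_le)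
    fun i => edist_le_mul_dL hL _ _ (by positivity) hbr

end

theorem dL_tendsto_implies_weakStar_general (L : selfAdjoint A → ℝ≥0∞) (hL : IsESeminorm L)
    (hdense : Dense {b : selfAdjoint A | L b < ⊤})
    (φn : ℕ → A →L[ℂ] ℂ) (hφn : ∀ n, IsState (φn n))
    (φ : A →L[ℂ] ℂ)
    (hconv : Tendsto (fun n => dL L ⇑(φn n) ⇑φ) atTop (𝓝 0)) :
    ∀ a : A, Tendsto (fun n => φn n a) atTop (𝓝 (φ a)) := by
  have hclosed : IsClosed {a : A | Tendsto (fun n => φn n a) atTop (𝓝 (φ a))} :=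
    ContinuousLinearMap.isClosed_setOf_tendsto_of_nnnorm_le (C := 1)
      (fun n => by simp [← NNReal.coe_le_coe, (hφn n).2]) φ
  have hsa : ∀ b : selfAdjoint A, Tendsto (fun n => φn n b) atTop (𝓝 (φ b)) :=
    hdense.induction (fun b hb => tendsto_apply_of_tendsto_dL hL hconv hb)
      (hclosed.preimage continuous_subtype_val)
  exact tendsto_apply_of_forall_selfAdjoint hsa

/-- If `{b ∈ A_sa : L b < ∞}` is norm dense in `A_sa` and `d_L(φ_n, φ) → 0` for states
`φ_n, φ`, then `φ_n → φ` in the weak-* topology. -/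
theorem dL_tendsto_implies_weakStar (L : selfAdjoint A → ℝ≥0∞) (hL : IsESeminorm L)
    (hdense : Dense {b : selfAdjoint A | L b < ⊤})
    (φn : ℕ → A →L[ℂ] ℂ) (hφn : ∀ n, IsState (φn n))
    (φ : A →L[ℂ] ℂ) (hφ : IsState φ)
    (hconv : Tendsto (fun n => dL L ⇑(φn n) ⇑φ) atTop (𝓝 0)) :
    ∀ a : A, Tendsto (fun n => φn n a) atTop (𝓝 (φ a)) :=
  dL_tendsto_implies_weakStar_general L hL hdense φn hφn φ hconv
end
end

section
/- Let A be a C*-algebra and L : A_sa → [0,∞] an extended seminorm on A_sa, and suppose there is an approximate identity (I_n) for A with L(I_n) → 0. Let φ be a state on A and let ψ be a positive continuous linear functional on A with ‖ψ‖ < 1 (such ψ are exactly the restrictions to A of states on the multiplier algebra M(A) that are not strictly continuous). Then d_L(φ, ψ) = ∞. -/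
open Filter Topology
open scoped ComplexOrder ENNReal NNReal MultiplierAlgebra

noncomputable section

variable {A : Type*} [NonUnitalCStarAlgebra A] [PartialOrder A] [StarOrderedRing A]

/- For a positive functional `φ`, Cauchy–Schwarz and `I n * I n ≤ I n` give
`‖φ (I n * a)‖² ≤ Re φ (I n) * ‖φ‖`; letting `I n * a → a` shows that `Re φ (I n)` eventually
exceeds any `c < ‖φ‖ = 1`, while `‖ψ (I n)‖ ≤ ‖ψ‖ < 1`. Hence `‖φ (I n) - ψ (I n)‖ ≥ δ > 0`
eventually, and the elements `t • I n` with `t * L (I n) ≤ 1`, available for arbitrarily large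
`t` since `L (I n) → 0`, witness `d_L(φ, ψ) ≥ t * δ`. -/

lemma PositiveLinearMap.norm_apply_star_mul_sq_le (f : A →ₚ[ℂ] ℂ) (x y : A) :
    ‖f (star x * y)‖ ^ 2 ≤ (f (star x * x)).re * (f (star y * y)).re := by
  have hsq (z : A) : ‖f.toPreGNS z‖ ^ 2 = (f (star z * z)).re := by
    rw [← Complex.ofReal_re (_ ^ 2), Complex.ofReal_pow, f.preGNS_norm_sq]; rfl
  have hcs := norm_inner_le_norm (𝕜 := ℂ) (f.toPreGNS x) (f.toPreGNS y)
  rw [f.preGNS_inner_def, f.ofPreGNS_toPreGNS, f.ofPreGNS_toPreGNS] at hcs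
  rw [← hsq, ← hsq, ← mul_pow]
  exact pow_le_pow_left₀ (norm_nonneg _) hcs 2

lemma mul_self_le_self_of_nonneg_of_norm_le_one {x : A} (hx : 0 ≤ x) (hx1 : ‖x‖ ≤ 1) :
    x * x ≤ x := by
  have hsa : IsSelfAdjoint (x * x) := by
    rw [IsSelfAdjoint, star_mul, hx.isSelfAdjoint.star_eq]
  rw [← Unitization.inr_le_iff _ _ hsa hx.isSelfAdjoint, Unitization.inr_mul]
  have h0 : 0 ≤ (x : Unitization ℂ A) := Unitization.inr_nonneg_iff.mpr hx
  have h1 : (x : Unitization ℂ A) ≤ 1 :=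
    (CStarAlgebra.norm_le_one_iff_of_nonneg _ h0).mp (by rwa [Unitization.norm_inr])
  simpa [pow_two] using CStarAlgebra.pow_antitone h0 h1 one_le_two

lemma norm_apply_mul_sq_le (φ : A →L[ℂ] ℂ) (hφ : ∀ a : A, 0 ≤ a → 0 ≤ φ a) {x a : A}
    (hx : 0 ≤ x) (hx1 : ‖x‖ ≤ 1) (ha : ‖a‖ ≤ 1) :
    ‖φ (x * a)‖ ^ 2 ≤ (φ x).re * ‖φ‖ := by
  have hcs := (PositiveLinearMap.mk₀ φ.toLinearMap hφ).norm_apply_star_mul_sq_le x a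
  simp only [PositiveLinearMap.mk₀, hx.isSelfAdjoint.star_eq] at hcs
  have hxx : (φ (x * x)).re ≤ (φ x).re := by
    have := hφ _ (sub_nonneg.2 (mul_self_le_self_of_nonneg_of_norm_le_one hx hx1))
    rw [map_sub, sub_nonneg] at this
    exact (Complex.le_def.1 this).1
  have haa : (φ (star a * a)).re ≤ ‖φ‖ :=
    calc (φ (star a * a)).re ≤ ‖φ (star a * a)‖ := Complex.re_le_norm _
      _ ≤ ‖φ‖ * (‖a‖ * ‖a‖) := by rw [← CStarRing.norm_star_mul_self]; exact φ.le_opNorm _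
      _ ≤ ‖φ‖ := mul_le_of_le_one_right (norm_nonneg _) (mul_le_one₀ ha (norm_nonneg _) ha)
  refine hcs.trans (mul_le_mul hxx haa ?_ ?_)
  · exact (Complex.le_def.1 (hφ _ (star_mul_self_nonneg a))).1
  · exact (Complex.le_def.1 (hφ _ hx)).1

lemma eventually_lt_re_apply_of_lt_norm (φ : A →L[ℂ] ℂ) (hφ : ∀ a : A, 0 ≤ a → 0 ≤ φ a)
    {ι : Type*} [Preorder ι] {I : ι → A} (hI : IsApproxUnit I) {c : ℝ} (hc : c < ‖φ‖) :
    ∀ᶠ n in atTop, c < (φ (I n)).re := by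
  obtain ⟨hI0, hI1, hIa⟩ := hI
  rcases lt_or_ge c 0 with hc0 | hc0
  · exact Eventually.of_forall fun n => hc0.trans_le (Complex.le_def.1 (hφ _ (hI0 n))).1
  have hφ0 : 0 < ‖φ‖ := hc0.trans_lt hc
  obtain ⟨a, ha, hca⟩ := φ.exists_lt_apply_of_lt_opNorm (r := √(c * ‖φ‖))
    ((Real.sqrt_lt' hφ0).2 (by nlinarith))
  have hlim : Tendsto (fun n => ‖φ (I n * a)‖ ^ 2) atTop (𝓝 (‖φ a‖ ^ 2)) :=
    ((φ.continuous.tendsto a).comp (tendsto_iff_norm_sub_tendsto_zero.2 (hIa a).1)).norm.pow 2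
  have hna : 0 < ‖φ a‖ := (Real.sqrt_nonneg _).trans_lt hca
  filter_upwards [hlim.eventually_const_lt ((Real.sqrt_lt' hna).1 hca)] with n hn
  exact lt_of_mul_lt_mul_right (hn.trans_le (norm_apply_mul_sq_le φ hφ (hI0 n) (hI1 n) ha.le))
    hφ0.le

section

variable {B : Type*} [NonUnitalCStarAlgebra B]

lemma coe_mul_nnnorm_sub_le_dL {L : selfAdjoint B → ℝ≥0∞}
    (hL : ∀ (t : ℝ) (b : selfAdjoint B), L (t • b) = (‖t‖₊ : ℝ≥0∞) * L b)
    (φ ψ : B →L[ℂ] ℂ) {t : ℝ≥0} {b : selfAdjoint B} (hb : t * L b ≤ 1) :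
    (t : ℝ≥0∞) * ‖φ b - ψ b‖₊ ≤ dL L φ ψ := by
  have hnorm : ‖(t : ℝ)‖₊ = t := Real.nnnorm_of_nonneg t.coe_nonneg
  refine le_iSup_of_le (⟨(t : ℝ) • b, by rwa [hL, hnorm]⟩ : {b : selfAdjoint B // L b ≤ 1}) ?_
  rw [selfAdjoint.val_smul, φ.map_smul_of_tower, ψ.map_smul_of_tower, ← smul_sub, nnnorm_smul,
    hnorm, ENNReal.coe_mul]

lemma dL_eq_top_of_tendsto {L : selfAdjoint B → ℝ≥0∞}
    (hL : ∀ (t : ℝ) (b : selfAdjoint B), L (t • b) = (‖t‖₊ : ℝ≥0∞) * L b)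
    (φ ψ : B →L[ℂ] ℂ) {β : Type*} {l : Filter β} [l.NeBot] {b : β → selfAdjoint B}
    (hLb : Tendsto (fun n => L (b n)) l (𝓝 0)) {δ : ℝ} (hδ : 0 < δ)
    (hbδ : ∀ᶠ n in l, δ ≤ ‖φ (b n) - ψ (b n)‖) :
    dL L φ ψ = ⊤ := by
  lift δ to ℝ≥0 using hδ.le
  refine ENNReal.eq_top_of_forall_nnreal_le fun M => ?_
  set t : ℝ≥0 := M / δ
  have ht : (0 : ℝ≥0∞) < (t : ℝ≥0∞)⁻¹ := ENNReal.inv_pos.2 ENNReal.coe_ne_top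
  obtain ⟨n, hLn, hn⟩ := ((hLb.eventually_lt_const ht).and hbδ).exists
  calc (M : ℝ≥0∞) = t * δ := by
        rw [← ENNReal.coe_mul, div_mul_cancel₀ _ (by exact_mod_cast hδ.ne')]
    _ ≤ t * ‖φ (b n) - ψ (b n)‖₊ := by gcongr; exact_mod_cast hn
    _ ≤ dL L φ ψ := coe_mul_nnnorm_sub_le_dL hL φ ψ <|
        (mul_le_mul_right hLn.le _).trans (ENNReal.mul_inv_le_one _)

end

theorem dL_eq_top_of_norm_lt_one_general (L : selfAdjoint A → ℝ≥0∞) (hL : IsESeminorm L)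
    {ι : Type*} [Preorder ι] [Nonempty ι] [IsDirected ι (· ≤ ·)]
    (I : ι → selfAdjoint A) (hI : IsApproxUnit fun n => (I n : A))
    (hLI : Tendsto (fun n => L (I n)) atTop (𝓝 0))
    (φ ψ : A →L[ℂ] ℂ) (hφ : IsState φ)
    (hψnorm : ‖ψ‖ < 1) :
    dL L ⇑φ ⇑ψ = ⊤ := by
  obtain ⟨hφpos, hφnorm⟩ := hφ
  obtain ⟨c, hψc, hc1⟩ := exists_between hψnorm
  refine dL_eq_top_of_tendsto hL.1 φ ψ hLI (sub_pos.2 hψc) ?_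
  filter_upwards [eventually_lt_re_apply_of_lt_norm φ hφpos hI (hφnorm ▸ hc1)] with n hn
  have hψn : ‖ψ (I n)‖ ≤ ‖ψ‖ :=
    (ψ.le_opNorm _).trans (mul_le_of_le_one_right (norm_nonneg _) (hI.2.1 n))
  calc c - ‖ψ‖ ≤ (φ (I n)).re - (ψ (I n)).re := by
        linarith [Complex.re_le_norm (ψ (I n))]
    _ ≤ ‖φ (I n) - ψ (I n)‖ := by rw [← Complex.sub_re]; exact Complex.re_le_norm _

/-- If there is an approximate identity along which `L` tends to `0`, then any state `φ`
is infinitely `d_L`-distant from any positive functional `ψ` of norm `< 1` (i.e. from the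
restriction to `A` of any state of the multiplier algebra that is not strictly continuous). -/
theorem dL_eq_top_of_norm_lt_one (L : selfAdjoint A → ℝ≥0∞) (hL : IsESeminorm L)
    {ι : Type*} [Preorder ι] [Nonempty ι] [IsDirected ι (· ≤ ·)]
    (I : ι → selfAdjoint A) (hI : IsApproxUnit fun n => (I n : A))
    (hLI : Tendsto (fun n => L (I n)) atTop (𝓝 0))
    (φ ψ : A →L[ℂ] ℂ) (hφ : IsState φ)
    (hψpos : ∀ a : A, 0 ≤ a → 0 ≤ ψ a) (hψnorm : ‖ψ‖ < 1) :
    dL L ⇑φ ⇑ψ = ⊤ :=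
  dL_eq_top_of_norm_lt_one_general L hL I hI hLI φ ψ hφ hψnorm
end
end

section
/- Let (A, L) be an extended complete spectral metric space. Then the state space of A is complete for the spectral distance: for every sequence (φ_n) of states on A that is d_L-Cauchy (for every ε > 0 there is N such that d_L(φ_n, φ_m) ≤ ε for all n, m ≥ N), there exists a state φ on A with d_L(φ_n, φ) → 0. -/
open Filter Topology
open scoped ComplexOrder ENNReal NNReal MultiplierAlgebra

noncomputable section

variable {A : Type*} [NonUnitalCStarAlgebra A] [PartialOrder A] [StarOrderedRing A]

/-- A (self-adjoint valued) approximate identity `(I n)` for `A` along which `L` tends to `0`. -/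
structure SpectralAUData (L : selfAdjoint A → ℝ≥0∞) where
  ι : Type
  [pre : Preorder ι]
  [ne : Nonempty ι]
  [dir : IsDirected ι (· ≤ ·)]
  I : ι → selfAdjoint A
  isAU : IsApproxUnit fun n => (I n : A)
  tendsto_L : Tendsto (fun n => L (I n)) atTop (𝓝 0)

/-- `(A, L)` is an extended complete spectral metric space: the finite-`L` self-adjoint
elements are dense, there is an approximate identity along which `L` tends to `0`, and
`L` is norm-lower semicontinuous. -/
structure IsECSMS (L : selfAdjoint A → ℝ≥0∞) : Prop where
  seminorm : IsESeminorm L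
  dense_finite : Dense {b : selfAdjoint A | L b < ⊤}
  lsc : LowerSemicontinuous L
  approxUnit : Nonempty (SpectralAUData L)

/-!
If `L b < ∞` then `φₙ b` is Cauchy, because `|φₘ b - φₙ b| ≤ c · d_L(φₘ, φₙ)` whenever `L b ≤ c`.
The `φₙ` are contractions and such `b` are dense in `A_sa`, so `φₙ a` converges for
every `a : A`; by Banach–Steinhaus the limit is a positive functional `φ` with `‖φ‖ ≤ 1`, and
`d_L(φₙ, φ) → 0` because `d_L` is lower semicontinuous under pointwise limits.

The one subtle point is `‖φ‖ = 1`, which fails for weak* limits of states in general. For a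
state `ψ` and an approximate unit `(Iₙ)`, the Cauchy–Schwarz inequality gives `‖ψ(Iₙ)‖ → 1`.
Since `L(Iₙ) → 0` and `d_L(φₖ, φ) < ∞` for large `k`, also `φ(Iₙ) - φₖ(Iₙ) → 0`, so
`‖φ(Iₙ)‖ → 1`.
-/

namespace PositiveLinearMap

theorem norm_apply_star_mul_sq_le_s2 (f : A →ₚ[ℂ] ℂ) (x y : A) :
    ‖f (star x * y)‖ ^ 2 ≤ ‖f (star x * x)‖ * ‖f (star y * y)‖ := by
  have norm_eq (z : A) : ‖f (star z * z)‖ = ‖f.toPreGNS z‖ ^ 2 := by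
    simpa using (congrArg norm (f.preGNS_norm_sq (f.toPreGNS z))).symm
  rw [norm_eq, norm_eq, ← mul_pow]
  gcongr
  exact norm_inner_le_norm (𝕜 := ℂ) (f.toPreGNS x) (f.toPreGNS y)

end PositiveLinearMap

theorem CStarAlgebra.mul_self_le_self {e : A} (he : 0 ≤ e) (he1 : ‖e‖ ≤ 1) : e * e ≤ e := by
  have hIcc := CStarAlgebra.inr_mem_Icc_iff_norm_le.mpr ⟨he, he1⟩
  have hsq := CStarAlgebra.pow_antitone hIcc.1 hIcc.2 one_le_two
  have hee : IsSelfAdjoint (e * e) := he.isSelfAdjoint.mul_self_nonneg.isSelfAdjoint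
  rw [← Unitization.inr_le_iff (e * e) e hee he.isSelfAdjoint]
  simpa [sq, Unitization.inr_mul] using hsq

theorem norm_apply_mul_sq_le_of_nonneg {φ : A →L[ℂ] ℂ} (hpos : ∀ a, 0 ≤ a → 0 ≤ φ a)
    (hφ : ‖φ‖ ≤ 1) {e : A} (he : 0 ≤ e) (he1 : ‖e‖ ≤ 1) (a : A) :
    ‖φ (e * a)‖ ^ 2 ≤ ‖φ e‖ * ‖a‖ ^ 2 := by
  let f : A →ₚ[ℂ] ℂ := .mk₀ φ.toLinearMap hpos
  have hee : ‖φ (e * e)‖ ≤ ‖φ e‖ :=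
    CStarAlgebra.norm_le_norm_of_nonneg_of_le (hpos _ (he.isSelfAdjoint.mul_self_nonneg))
      (f.monotone' (CStarAlgebra.mul_self_le_self he he1))
  have haa : ‖φ (star a * a)‖ ≤ ‖a‖ ^ 2 := calc
    ‖φ (star a * a)‖ ≤ ‖φ‖ * ‖star a * a‖ := φ.le_opNorm _
    _ ≤ 1 * ‖a‖ ^ 2 := by rw [CStarRing.norm_star_mul_self, ← sq]; gcongr
    _ = ‖a‖ ^ 2 := one_mul _
  calc ‖φ (e * a)‖ ^ 2 = ‖f (star e * a)‖ ^ 2 := by rw [he.isSelfAdjoint.star_eq]; rfl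
    _ ≤ ‖f (star e * e)‖ * ‖f (star a * a)‖ := f.norm_apply_star_mul_sq_le_s2 e a
    _ ≤ ‖φ e‖ * ‖a‖ ^ 2 := by
      rw [he.isSelfAdjoint.star_eq]; exact mul_le_mul hee haa (norm_nonneg _) (norm_nonneg _)

theorem IsState.tendsto_norm_apply {φ : A →L[ℂ] ℂ} (hφ : IsState φ) {ι : Type*} [Preorder ι]
    {I : ι → A} (hI : IsApproxUnit I) : Tendsto (fun n => ‖φ (I n)‖) atTop (𝓝 1) := by
  obtain ⟨hpos, hnorm⟩ := hφ
  obtain ⟨hI0, hI1, hIa⟩ := hI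
  refine tendsto_order.2 ⟨fun c hc => ?_, fun c hc => .of_forall fun n => ?_⟩
  · obtain ⟨a, ha1, hca⟩ : ∃ a : A, ‖a‖ ≤ 1 ∧ c < ‖φ a‖ ^ 2 := by
      obtain ⟨a, ha1, ha⟩ := φ.exists_lt_apply_of_lt_opNorm (r := √c) (by
        rw [hnorm, Real.sqrt_lt' one_pos, one_pow]; exact hc)
      exact ⟨a, ha1.le, (Real.sqrt_lt' ((Real.sqrt_nonneg c).trans_lt ha)).1 ha⟩
    have hlim : Tendsto (fun n => ‖φ (I n * a)‖ ^ 2) atTop (𝓝 (‖φ a‖ ^ 2)) :=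
      (((φ.continuous.tendsto a).comp
        (tendsto_iff_norm_sub_tendsto_zero.2 (hIa a).1)).norm).pow 2
    filter_upwards [hlim.eventually_const_lt hca] with n hn
    calc c < ‖φ (I n * a)‖ ^ 2 := hn
      _ ≤ ‖φ (I n)‖ * ‖a‖ ^ 2 := norm_apply_mul_sq_le_of_nonneg hpos hnorm.le (hI0 n) (hI1 n) a
      _ ≤ ‖φ (I n)‖ := mul_le_of_le_one_right (norm_nonneg _) (pow_le_one₀ (norm_nonneg _) ha1)
  · calc ‖φ (I n)‖ ≤ ‖φ‖ * ‖I n‖ := φ.le_opNorm _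
      _ ≤ 1 := by rw [hnorm, one_mul]; exact hI1 n
      _ < c := hc

theorem cauchySeq_apply_of_mem_closure {X α : Type*} [PseudoMetricSpace X] [PseudoMetricSpace α]
    {F : ℕ → X → α} {K : ℝ≥0} (hF : ∀ n, LipschitzWith K (F n)) {s : Set X}
    (hs : ∀ y ∈ s, CauchySeq fun n => F n y) {x : X} (hx : x ∈ closure s) :
    CauchySeq fun n => F n x := by
  refine Metric.cauchySeq_iff.2 fun ε hε => ?_
  obtain ⟨y, hy, hxy⟩ := Metric.mem_closure_iff.1 hx (ε / (3 * (K + 1))) (by positivity)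
  obtain ⟨N, hN⟩ := Metric.cauchySeq_iff.1 (hs y hy) (ε / 3) (by positivity)
  have hclose (k : ℕ) : dist (F k x) (F k y) < ε / 3 := calc
    dist (F k x) (F k y) ≤ K * dist x y := (hF k).dist_le_mul x y
    _ ≤ (K + 1) * dist x y := by gcongr; linarith
    _ < (K + 1) * (ε / (3 * (K + 1))) := by gcongr
    _ = ε / 3 := by field_simp
  refine ⟨N, fun m hm n hn => ?_⟩
  calc dist (F m x) (F n x) ≤ dist (F m x) (F m y) + dist (F m y) (F n y) + dist (F n y) (F n x) :=
        dist_triangle4 _ _ _ _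
    _ < ε / 3 + ε / 3 + ε / 3 := by
        gcongr
        · exact hclose m
        · exact hN m hm n hn
        · rw [dist_comm]; exact hclose n
    _ = ε := by ring

theorem exists_tendsto_apply_of_cauchySeq {𝕜 E F : Type*} [NontriviallyNormedField 𝕜]
    [NormedAddCommGroup E] [NormedSpace 𝕜 E] [CompleteSpace E]
    [NormedAddCommGroup F] [NormedSpace 𝕜 F] [CompleteSpace F]
    {φ : ℕ → E →L[𝕜] F} (h : ∀ a, CauchySeq fun n => φ n a) :
    ∃ ψ : E →L[𝕜] F, ∀ a, Tendsto (fun n => φ n a) atTop (𝓝 (ψ a)) := by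
  choose f hf using fun a => cauchySeq_tendsto_of_complete (h a)
  exact ⟨continuousLinearMapOfTendsto φ (tendsto_pi_nhds.2 hf), hf⟩

theorem ContinuousLinearMap.opNorm_le_of_tendsto_apply {𝕜 E F : Type*} [NontriviallyNormedField 𝕜]
    [NormedAddCommGroup E] [NormedSpace 𝕜 E] [NormedAddCommGroup F] [NormedSpace 𝕜 F]
    {ι : Type*} {l : Filter ι} [l.NeBot] {φ : ι → E →L[𝕜] F} {ψ : E →L[𝕜] F} {C : ℝ}
    (hC : 0 ≤ C) (hφ : ∀ n, ‖φ n‖ ≤ C) (hψ : ∀ a, Tendsto (fun n => φ n a) l (𝓝 (ψ a))) :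
    ‖ψ‖ ≤ C :=
  ψ.opNorm_le_bound hC fun a =>
    le_of_tendsto' (hψ a).norm fun n => (φ n).le_of_opNorm_le (hφ n) a

section SpectralDistance

variable {A : Type*} [NonUnitalCStarAlgebra A] {L : selfAdjoint A → ℝ≥0∞}

theorem enorm_sub_le_mul_dL (hL : IsESeminorm L) (φ ψ : A →L[ℂ] ℂ) {b : selfAdjoint A}
    {c : ℝ≥0} (hc : c ≠ 0) (hb : L b ≤ c) : ‖φ b - ψ b‖ₑ ≤ c * dL L φ ψ := by
  set t : ℝ := ((c⁻¹ : ℝ≥0) : ℝ)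
  have hLb : L (t • b) ≤ 1 := calc
    L (t • b) = (c⁻¹ : ℝ≥0) * L b := by rw [hL.1, NNReal.nnnorm_eq]
    _ ≤ (c⁻¹ : ℝ≥0) * c := by gcongr
    _ = 1 := by rw [← ENNReal.coe_mul, inv_mul_cancel₀ hc, ENNReal.coe_one]
  have hscaled : ‖φ (t • b : selfAdjoint A) - ψ (t • b : selfAdjoint A)‖ₑ ≤ dL L φ ψ :=
    le_iSup (fun b : {b : selfAdjoint A // L b ≤ 1} => (‖φ (b.1 : A) - ψ (b.1 : A)‖₊ : ℝ≥0∞))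
      ⟨_, hLb⟩
  rw [selfAdjoint.val_smul, φ.map_smul_of_tower, ψ.map_smul_of_tower, ← smul_sub, enorm_smul,
    NNReal.enorm_eq] at hscaled
  calc ‖φ b - ψ b‖ₑ = c * ((c⁻¹ : ℝ≥0) * ‖φ b - ψ b‖ₑ) := by
        rw [← mul_assoc, ← ENNReal.coe_mul, mul_inv_cancel₀ hc, ENNReal.coe_one, one_mul]
    _ ≤ c * dL L φ ψ := by gcongr

theorem tendsto_sub_apply_of_tendsto_L (hL : IsESeminorm L) {φ ψ : A →L[ℂ] ℂ}
    (hd : dL L φ ψ ≠ ⊤) {ι : Type*} {l : Filter ι} {b : ι → selfAdjoint A}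
    (hb : Tendsto (fun n => L (b n)) l (𝓝 0)) :
    Tendsto (fun n => φ (b n) - ψ (b n)) l (𝓝 0) := by
  rw [tendsto_zero_iff_enorm_tendsto_zero, ENNReal.tendsto_nhds_zero]
  intro ε hε
  obtain ⟨c, hc, hcε⟩ := ENNReal.exists_nnreal_pos_mul_lt hd hε.ne'
  filter_upwards [hb.eventually_lt_const (ENNReal.coe_pos.2 hc)] with n hn
  exact (enorm_sub_le_mul_dL hL φ ψ hc.ne' hn.le).trans hcε.le

theorem cauchySeq_apply_of_L_lt_top (hL : IsESeminorm L) {φ : ℕ → A →L[ℂ] ℂ}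
    (hcauchy : ∀ ε : ℝ≥0∞, 0 < ε → ∃ N : ℕ, ∀ m n : ℕ, N ≤ m → N ≤ n →
      dL L ⇑(φ m) ⇑(φ n) ≤ ε) {b : selfAdjoint A} (hb : L b < ⊤) :
    CauchySeq fun n => φ n b := by
  obtain ⟨c, hbc, -⟩ := ENNReal.lt_iff_exists_nnreal_btwn.1 hb
  have hc : c ≠ 0 := by rintro rfl; simp at hbc
  refine EMetric.cauchySeq_iff.2 fun ε hε => ?_
  obtain ⟨δ, hδ, hδc⟩ := ENNReal.exists_pos_mul_lt ENNReal.coe_ne_top hε.ne'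
  obtain ⟨N, hN⟩ := hcauchy δ hδ
  refine ⟨N, fun m hm n hn => ?_⟩
  calc edist (φ m b) (φ n b) = ‖φ m b - φ n b‖ₑ := edist_eq_enorm_sub _ _
    _ ≤ c * dL L (φ m) (φ n) := enorm_sub_le_mul_dL hL _ _ hc hbc.le
    _ ≤ c * δ := by gcongr; exact hN m n hm hn
    _ < ε := by rwa [mul_comm]

theorem dL_le_of_tendsto {ι : Type*} {l : Filter ι} [l.NeBot] {φ χ : A → ℂ} {ψ : ι → A → ℂ}
    (hψ : ∀ a, Tendsto (fun m => ψ m a) l (𝓝 (χ a))) {ε : ℝ≥0∞}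
    (hε : ∀ᶠ m in l, dL L φ (ψ m) ≤ ε) : dL L φ χ ≤ ε := by
  refine iSup_le fun b => le_of_tendsto ?_ (hε.mono fun m hm => (le_iSup _ b).trans hm)
  exact (ENNReal.continuous_coe.tendsto _).comp ((tendsto_const_nhds.sub (hψ b.1)).nnnorm)

theorem tendsto_dL_of_tendsto_apply {φn : ℕ → A →L[ℂ] ℂ} {φ : A →L[ℂ] ℂ}
    (hcauchy : ∀ ε : ℝ≥0∞, 0 < ε → ∃ N : ℕ, ∀ m n : ℕ, N ≤ m → N ≤ n →
      dL L ⇑(φn m) ⇑(φn n) ≤ ε) (hφ : ∀ a, Tendsto (fun n => φn n a) atTop (𝓝 (φ a))) :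
    Tendsto (fun n => dL L (φn n) φ) atTop (𝓝 0) := by
  refine ENNReal.tendsto_atTop_zero.2 fun ε hε => ?_
  obtain ⟨N, hN⟩ := hcauchy ε hε
  exact ⟨N, fun n hn => dL_le_of_tendsto hφ (eventually_atTop.2 ⟨N, fun m hm => hN n m hn hm⟩)⟩

theorem cauchySeq_apply_of_dense (hL : IsESeminorm L)
    (hdense : Dense {b : selfAdjoint A | L b < ⊤}) {φ : ℕ → A →L[ℂ] ℂ} (hφ : ∀ n, ‖φ n‖ ≤ 1)
    (hcauchy : ∀ ε : ℝ≥0∞, 0 < ε → ∃ N : ℕ, ∀ m n : ℕ, N ≤ m → N ≤ n →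
      dL L ⇑(φ m) ⇑(φ n) ≤ ε) (b : selfAdjoint A) :
    CauchySeq fun n => φ n b := by
  have hlip (n : ℕ) : LipschitzWith 1 fun b : selfAdjoint A => φ n b := by
    refine LipschitzWith.of_dist_le_mul fun b b' => ?_
    rw [dist_eq_norm, ← map_sub, Subtype.dist_eq, dist_eq_norm]
    exact (φ n).le_of_opNorm_le (hφ n) _
  exact cauchySeq_apply_of_mem_closure hlip
    (fun _ hb => cauchySeq_apply_of_L_lt_top hL hcauchy hb) (hdense b)

theorem cauchySeq_apply_of_forall_selfAdjoint {φ : ℕ → A →L[ℂ] ℂ}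
    (h : ∀ b : selfAdjoint A, CauchySeq fun n => φ n b) (a : A) :
    CauchySeq fun n => φ n a := by
  have hdecomp (n : ℕ) :
      φ n a = φ n (realPart a) + Complex.I • φ n (imaginaryPart a) := by
    conv_lhs => rw [← realPart_add_I_smul_imaginaryPart a]
    rw [map_add, map_smul]
  simp_rw [hdecomp]
  exact (h _).add ((uniformContinuous_const_smul Complex.I).comp_cauchySeq (h _))

end SpectralDistance

theorem norm_eq_one_of_dL_ne_top {L : selfAdjoint A → ℝ≥0∞} (hL : IsESeminorm L)
    (D : SpectralAUData L) {ψ φ : A →L[ℂ] ℂ} (hψ : IsState ψ) (hφ : ‖φ‖ ≤ 1)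
    (hd : dL L ψ φ ≠ ⊤) : ‖φ‖ = 1 := by
  let _ := D.pre
  have _ := D.ne
  have _ := D.dir
  have hlim : Tendsto (fun n => ‖ψ (D.I n)‖ - ‖ψ (D.I n) - φ (D.I n)‖) atTop (𝓝 (1 - 0)) :=
    (hψ.tendsto_norm_apply D.isAU).sub
      (tendsto_norm_zero.comp (tendsto_sub_apply_of_tendsto_L hL hd D.tendsto_L))
  refine le_antisymm hφ (le_of_tendsto' (by simpa using hlim) fun n => ?_)
  calc ‖ψ (D.I n)‖ - ‖ψ (D.I n) - φ (D.I n)‖ ≤ ‖φ (D.I n)‖ := by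
        linarith [norm_sub_norm_le (ψ (D.I n)) (φ (D.I n))]
    _ ≤ ‖φ‖ * ‖(D.I n : A)‖ := φ.le_opNorm _
    _ ≤ ‖φ‖ := mul_le_of_le_one_right (norm_nonneg _) (D.isAU.2.1 n)

/-- The state space of an extended complete spectral metric space is `d_L`-complete. -/
theorem dL_complete (L : selfAdjoint A → ℝ≥0∞) (hL : IsECSMS L)
    (φn : ℕ → A →L[ℂ] ℂ) (hφn : ∀ n, IsState (φn n))
    (hcauchy : ∀ ε : ℝ≥0∞, 0 < ε → ∃ N : ℕ, ∀ m n : ℕ, N ≤ m → N ≤ n →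
      dL L ⇑(φn m) ⇑(φn n) ≤ ε) :
    ∃ φ : A →L[ℂ] ℂ, IsState φ ∧ Tendsto (fun n => dL L ⇑(φn n) ⇑φ) atTop (𝓝 0) := by
  have hφn1 (n : ℕ) : ‖φn n‖ ≤ 1 := (hφn n).2.le
  obtain ⟨φ, hφ⟩ := exists_tendsto_apply_of_cauchySeq <| cauchySeq_apply_of_forall_selfAdjoint <|
    cauchySeq_apply_of_dense hL.seminorm hL.dense_finite hφn1 hcauchy
  have hconv := tendsto_dL_of_tendsto_apply hcauchy hφ
  obtain ⟨k, hk⟩ := (hconv.eventually (gt_mem_nhds one_pos)).exists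
  obtain ⟨D⟩ := hL.approxUnit
  have hpos (a : A) (ha : 0 ≤ a) : 0 ≤ φ a := ge_of_tendsto' (hφ a) fun n => (hφn n).1 a ha
  have hnorm : ‖φ‖ = 1 := norm_eq_one_of_dL_ne_top hL.seminorm D (hφn k)
    (φ.opNorm_le_of_tendsto_apply zero_le_one hφn1 hφ) (hk.trans ENNReal.one_lt_top).ne
  exact ⟨φ, ⟨hpos, hnorm⟩, hconv⟩
end
end

section
/- Let A be a C*-algebra and L : A_sa → [0,∞] an extended seminorm on A_sa. Define L̃ : A_sa → [0,∞] by L̃(b) := inf{ C > 0 : |φ(b) − ψ(b)| ≤ C·d_L(φ, ψ) for all states φ, ψ on A } (the inequality read in [0,∞], so it holds automatically when d_L(φ, ψ) = ∞; inf ∅ := ∞). Then: (i) L̃(b) ≤ L(b) for every b ∈ A_sa; (ii) L̃ is lower semicontinuous with respect to the norm on A_sa; (iii) L̃ induces the same spectral distance as L, i.e. for all states φ, ψ on A, sup{ |φ(b) − ψ(b)| : b ∈ A_sa, L̃(b) ≤ 1 } = sup{ |φ(b) − ψ(b)| : b ∈ A_sa, L(b) ≤ 1 }. -/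
open Filter Topology
open scoped ComplexOrder ENNReal NNReal MultiplierAlgebra

noncomputable section

variable {A : Type*} [NonUnitalCStarAlgebra A] [PartialOrder A] [StarOrderedRing A]

/-- `L̃ b = inf { C > 0 : |φ b - ψ b| ≤ C · d_L(φ, ψ) for all states φ, ψ }`,
with `inf ∅ = ∞` and the inequality read in `[0, ∞]`. -/
def tildeL (L : selfAdjoint A → ℝ≥0∞) (b : selfAdjoint A) : ℝ≥0∞ :=
  sInf {C : ℝ≥0∞ | 0 < C ∧ C ≠ ⊤ ∧
    ∀ φ ψ : A →L[ℂ] ℂ, IsState φ → IsState ψ →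
      (‖φ (b : A) - ψ (b : A)‖₊ : ℝ≥0∞) ≤ C * dL L ⇑φ ⇑ψ}

/-! `L̃ b` is the supremum over pairs of states of `|φ b - ψ b| / d_L(φ, ψ)`, a supremum of
norm-continuous functions of `b` divided by constants, hence lower semicontinuous. Scaling `b`
by `1 / C` for `C > L b` shows that every such quotient is at most `L b`, so `L̃ ≤ L`, and
therefore `d_L ≤ d_L̃`; conversely `L̃ b ≤ 1` says exactly that `|φ b - ψ b| ≤ d_L(φ, ψ)`. -/

namespace ENNReal

theorem sInf_setOf_pos_ne_top_le (m : ℝ≥0∞) : sInf {C : ℝ≥0∞ | 0 < C ∧ C ≠ ⊤ ∧ m ≤ C} = m := by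
  refine le_antisymm (le_of_forall_gt_imp_ge_of_dense fun C hC => ?_) (le_sInf fun C hC => hC.2.2)
  rcases eq_or_ne C ⊤ with rfl | hCt
  · exact le_top
  · exact sInf_le ⟨pos_of_gt hC, hCt, hC.le⟩

theorem le_of_div_le_one {a b : ℝ≥0∞} (h : a / b ≤ 1) : a ≤ b := by
  rcases eq_or_ne b 0 with rfl | hb0
  · by_contra ha
    rw [ENNReal.div_zero (ne_bot_of_gt (not_le.1 ha))] at h
    exact one_lt_top.not_ge h
  rcases eq_or_ne b ⊤ with rfl | hbt
  · exact le_top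
  · simpa using (ENNReal.div_le_iff hb0 hbt).1 h

theorem lowerSemicontinuous_div_const (d : ℝ≥0∞) : LowerSemicontinuous fun x : ℝ≥0∞ => x / d := by
  rcases eq_or_ne d 0 with rfl | hd
  · have hsup : (fun x : ℝ≥0∞ => x / 0) = fun x => ⨆ n : ℕ, x * (n : ℝ≥0∞) := by
      funext x
      rw [← ENNReal.mul_iSup, ENNReal.iSup_natCast, div_eq_mul_inv, ENNReal.inv_zero]
    rw [hsup]
    exact lowerSemicontinuous_iSup fun n =>
      (ENNReal.continuous_mul_const (ENNReal.natCast_ne_top n)).lowerSemicontinuous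
  · exact (ENNReal.continuous_div_const d hd).lowerSemicontinuous

end ENNReal

section SpectralDistance

variable {E : Type*} [NonUnitalCStarAlgebra E]

theorem nnnorm_sub_le_dL {L : selfAdjoint E → ℝ≥0∞} {b : selfAdjoint E} (hb : L b ≤ 1)
    (φ ψ : E → ℂ) : (‖φ (b : E) - ψ (b : E)‖₊ : ℝ≥0∞) ≤ dL L φ ψ :=
  le_iSup (fun b : {b : selfAdjoint E // L b ≤ 1} => (‖φ (b.1 : E) - ψ (b.1 : E)‖₊ : ℝ≥0∞))
    ⟨b, hb⟩

theorem dL_le_dL_of_le {L L' : selfAdjoint E → ℝ≥0∞} (h : ∀ b, L' b ≤ L b) (φ ψ : E → ℂ) :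
    dL L φ ψ ≤ dL L' φ ψ :=
  iSup_le fun b => nnnorm_sub_le_dL ((h b.1).trans b.2) φ ψ

theorem nnnorm_sub_le_mul_dL {L : selfAdjoint E → ℝ≥0∞}
    (hL : ∀ (t : ℝ) (b : selfAdjoint E), L (t • b) = (‖t‖₊ : ℝ≥0∞) * L b)
    {b : selfAdjoint E} {c : ℝ≥0} (hc : c ≠ 0) (hb : L b ≤ c) (φ ψ : E →L[ℂ] ℂ) :
    (‖φ (b : E) - ψ (b : E)‖₊ : ℝ≥0∞) ≤ c * dL L ⇑φ ⇑ψ := by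
  have hnorm : ‖(c : ℝ)⁻¹‖₊ = c⁻¹ := by rw [nnnorm_inv, NNReal.nnnorm_eq]
  have hscaled : L ((c : ℝ)⁻¹ • b) ≤ 1 := by
    rw [hL, hnorm, ENNReal.coe_inv hc]
    exact (ENNReal.inv_mul_le_iff (by simpa using hc) ENNReal.coe_ne_top).2 (by simpa using hb)
  have key := nnnorm_sub_le_dL hscaled φ ψ
  rw [selfAdjoint.val_smul, φ.map_smul_of_tower, ψ.map_smul_of_tower, ← smul_sub, nnnorm_smul,
    hnorm, ENNReal.coe_mul, ENNReal.coe_inv hc] at key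
  exact (ENNReal.inv_mul_le_iff (by simpa using hc) ENNReal.coe_ne_top).1 key

theorem tildeL_eq_iSup [PartialOrder E] (L : selfAdjoint E → ℝ≥0∞) (b : selfAdjoint E) :
    tildeL L b = ⨆ (φ : {φ : E →L[ℂ] ℂ // IsState φ}) (ψ : {ψ : E →L[ℂ] ℂ // IsState ψ}),
      (‖φ.1 (b : E) - ψ.1 (b : E)‖₊ : ℝ≥0∞) / dL L ⇑φ.1 ⇑ψ.1 := by
  rw [tildeL, ← ENNReal.sInf_setOf_pos_ne_top_le (⨆ (φ : {φ : E →L[ℂ] ℂ // IsState φ})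
    (ψ : {ψ : E →L[ℂ] ℂ // IsState ψ}), _)]
  refine congrArg sInf (Set.ext fun C => and_congr_right fun hC0 => and_congr_right fun hCt => ?_)
  simp only [iSup_le_iff, Subtype.forall, ENNReal.div_le_iff_le_mul (Or.inr hCt) (Or.inr hC0.ne')]
  exact ⟨fun h φ hφ ψ hψ => h φ ψ hφ hψ, fun h φ ψ hφ hψ => h φ hφ ψ hψ⟩

theorem tildeL_le [PartialOrder E] {L : selfAdjoint E → ℝ≥0∞}
    (hL : ∀ (t : ℝ) (b : selfAdjoint E), L (t • b) = (‖t‖₊ : ℝ≥0∞) * L b) (b : selfAdjoint E) :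
    tildeL L b ≤ L b := by
  rw [tildeL_eq_iSup]
  refine iSup₂_le fun φ ψ => le_of_forall_gt_imp_ge_of_dense fun C hC => ?_
  rcases eq_or_ne C ⊤ with rfl | hCt
  · exact le_top
  lift C to ℝ≥0 using hCt
  exact ENNReal.div_le_of_le_mul
    (nnnorm_sub_le_mul_dL hL (ENNReal.coe_ne_zero.1 (pos_of_gt hC).ne') hC.le φ.1 ψ.1)

theorem lowerSemicontinuous_tildeL [PartialOrder E] (L : selfAdjoint E → ℝ≥0∞) :
    LowerSemicontinuous (tildeL L) := by
  rw [funext (tildeL_eq_iSup L)]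
  exact lowerSemicontinuous_iSup fun φ => lowerSemicontinuous_iSup fun ψ =>
    (ENNReal.lowerSemicontinuous_div_const _).comp <| ENNReal.continuous_coe.comp <|
      continuous_nnnorm.comp <| (φ.1.continuous.sub ψ.1.continuous).comp continuous_subtype_val

theorem nnnorm_sub_le_dL_of_tildeL_le_one [PartialOrder E] {L : selfAdjoint E → ℝ≥0∞}
    {b : selfAdjoint E} (hb : tildeL L b ≤ 1) {φ ψ : E →L[ℂ] ℂ} (hφ : IsState φ)
    (hψ : IsState ψ) : (‖φ (b : E) - ψ (b : E)‖₊ : ℝ≥0∞) ≤ dL L ⇑φ ⇑ψ := by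
  refine ENNReal.le_of_div_le_one (le_trans ?_ ((tildeL_eq_iSup L b).symm.trans_le hb))
  exact le_iSup₂_of_le (⟨φ, hφ⟩ : {φ : E →L[ℂ] ℂ // IsState φ}) ⟨ψ, hψ⟩ le_rfl

end SpectralDistance

/-- `L̃ ≤ L`, `L̃` is norm-lower semicontinuous, and `L̃` induces the same spectral
distance as `L` on states. -/
theorem tildeL_le_and_lsc_and_same_dL (L : selfAdjoint A → ℝ≥0∞) (hL : IsESeminorm L) :
    (∀ b : selfAdjoint A, tildeL L b ≤ L b) ∧
    LowerSemicontinuous (tildeL L) ∧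
    ∀ φ ψ : A →L[ℂ] ℂ, IsState φ → IsState ψ →
      dL (tildeL L) ⇑φ ⇑ψ = dL L ⇑φ ⇑ψ := by
  refine ⟨tildeL_le hL.1, lowerSemicontinuous_tildeL L, fun φ ψ hφ hψ => le_antisymm ?_ ?_⟩
  · exact iSup_le fun b => nnnorm_sub_le_dL_of_tildeL_le_one b.2 hφ hψ
  · exact dL_le_dL_of_le (tildeL_le hL.1) φ ψ
end
end

section
/- Let A and B be C*-algebras and f : A → 𝓜(B) a *-homomorphism which is relatively proper: there exists an approximate identity (I_n) for A such that ‖f(I_n)·ι(b) − ι(b)‖ → 0 and ‖ι(b)·f(I_n) − ι(b)‖ → 0 for every b ∈ B. Let Φ be a state on the unital C*-algebra 𝓜(B) whose restriction Φ ∘ ι to B has norm 1. Then Φ ∘ f is a state on A, i.e. Φ ∘ f is positive and ‖Φ ∘ f‖ = 1. -/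
open Filter Topology
open scoped ComplexOrder ENNReal NNReal MultiplierAlgebra

noncomputable section

variable {A : Type*} [NonUnitalCStarAlgebra A] [PartialOrder A] [StarOrderedRing A]

/-- The canonical embedding `B → 𝓜(ℂ, B)` as a continuous linear map. -/
def iotaCLM (B : Type*) [NonUnitalCStarAlgebra B] : B →L[ℂ] 𝓜(ℂ, B) :=
  LinearMap.mkContinuous
    { toFun := fun a => (a : 𝓜(ℂ, B))
      map_add' := fun x y => map_add (DoubleCentralizer.coeHom (𝕜 := ℂ) (A := B)) x y
      map_smul' := fun c x => map_smul (DoubleCentralizer.coeHom (𝕜 := ℂ) (A := B)) c x }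
    1 (fun a => by
      rw [one_mul]
      calc ‖(a : 𝓜(ℂ, B))‖ = ‖(a : 𝓜(ℂ, B)).fst‖ := (DoubleCentralizer.norm_fst _).symm
        _ = ‖ContinuousLinearMap.mul ℂ B a‖ := by rw [DoubleCentralizer.coe_fst]
        _ ≤ ‖a‖ := ContinuousLinearMap.opNorm_mul_apply_le ℂ B a)

/-!
Positivity of `Φ ∘ f` comes from that of `f`, since a `*`-homomorphism is monotone, and
`‖Φ ∘ f‖ ≤ 1` is clear. For the reverse bound put `x = f (I n)`, so that `0 ≤ x ≤ 1` and hence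
`x² ≤ x`. For `b ∈ B` with `‖b‖ ≤ 1`, the Cauchy–Schwarz inequality for the positive functional `Φ`
gives `|Φ (x b)|² ≤ Φ (x²) Φ (b* b) ≤ Φ x ≤ ‖Φ ∘ f‖`. Relative properness says `x b → b`, so
`|Φ b|² ≤ ‖Φ ∘ f‖`, and taking the supremum over `b` yields `1 = ‖Φ ∘ ι‖² ≤ ‖Φ ∘ f‖`.
-/

namespace PositiveLinearMap

variable {E : Type*} [NonUnitalCStarAlgebra E] [PartialOrder E] [StarOrderedRing E]

theorem norm_apply_star_mul_sq_le_s4 (φ : E →ₚ[ℂ] ℂ) (a b : E) :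
    ‖φ (star a * b)‖ ^ 2 ≤ (φ (star a * a)).re * (φ (star b * b)).re := by
  have h := norm_inner_le_norm (𝕜 := ℂ) (φ.toPreGNS a) (φ.toPreGNS b)
  rw [preGNS_inner_def, preGNS_norm_def, preGNS_norm_def] at h
  calc ‖φ (star a * b)‖ ^ 2 ≤ (√(φ (star a * a)).re * √(φ (star b * b)).re) ^ 2 := by
        gcongr; exact h
    _ = (φ (star a * a)).re * (φ (star b * b)).re := by
        rw [mul_pow, Real.sq_sqrt (Complex.nonneg_iff.mp (φ.map_nonneg (star_mul_self_nonneg a))).1,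
          Real.sq_sqrt (Complex.nonneg_iff.mp (φ.map_nonneg (star_mul_self_nonneg b))).1]

end PositiveLinearMap

namespace NonUnitalStarAlgHom

variable {E F : Type*} [NonUnitalCStarAlgebra E] [NonUnitalCStarAlgebra F]

def toContinuousLinearMap (f : E →⋆ₙₐ[ℂ] F) : E →L[ℂ] F :=
  (f : E →ₗ[ℂ] F).mkContinuous 1 fun a => by simpa using NonUnitalStarAlgHom.norm_apply_le f a

theorem norm_toContinuousLinearMap_le (f : E →⋆ₙₐ[ℂ] F) : ‖f.toContinuousLinearMap‖ ≤ 1 :=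
  LinearMap.mkContinuous_norm_le _ zero_le_one _

end NonUnitalStarAlgHom

section UnitalCStarAlgebra

variable {M : Type*} [CStarAlgebra M] [PartialOrder M] [StarOrderedRing M]

theorem PositiveLinearMap.norm_apply_mul_sq_le_re_apply (φ : M →ₚ[ℂ] ℂ) {x b : M} (hx₀ : 0 ≤ x)
    (hx₁ : ‖x‖ ≤ 1) (hb : (φ (star b * b)).re ≤ 1) : ‖φ (x * b)‖ ^ 2 ≤ (φ x).re := by
  have hxx : x * x ≤ x := by
    simpa [pow_two] using CStarAlgebra.pow_antitone hx₀
      ((CStarAlgebra.norm_le_one_iff_of_nonneg x).mp hx₁) one_le_two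
  calc ‖φ (x * b)‖ ^ 2 ≤ (φ (x * x)).re * (φ (star b * b)).re := by
        simpa [hx₀.star_eq] using φ.norm_apply_star_mul_sq_le_s4 x b
    _ ≤ (φ (x * x)).re := by
        refine mul_le_of_le_one_right ?_ hb
        exact (Complex.nonneg_iff.mp (φ.map_nonneg (IsSelfAdjoint.of_nonneg hx₀).mul_self_nonneg)).1
    _ ≤ (φ x).re := (Complex.le_def.mp (OrderHomClass.mono φ hxx)).1

namespace ContinuousLinearMap

variable {ι : Type*} {l : Filter ι} [l.NeBot] (Φ : M →L[ℂ] ℂ) {e : ι → M} {c : ℝ}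

theorem norm_apply_sq_le_of_tendsto_mul (hΦ₀ : ∀ x, 0 ≤ x → 0 ≤ Φ x) (hΦ₁ : ‖Φ‖ ≤ 1)
    (he₀ : ∀ n, 0 ≤ e n) (he₁ : ∀ n, ‖e n‖ ≤ 1) (hc : ∀ n, (Φ (e n)).re ≤ c)
    {y : M} (hy : ‖y‖ ≤ 1) (hey : Tendsto (fun n => e n * y) l (𝓝 y)) : ‖Φ y‖ ^ 2 ≤ c := by
  let φ : M →ₚ[ℂ] ℂ := .mk₀ Φ.toLinearMap hΦ₀
  have hy' : (φ (star y * y)).re ≤ 1 :=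
    calc (φ (star y * y)).re ≤ ‖Φ (star y * y)‖ := Complex.re_le_norm _
      _ ≤ ‖Φ‖ * ‖star y * y‖ := Φ.le_opNorm _
      _ ≤ 1 * 1 := by
          rw [CStarRing.norm_star_mul_self]
          gcongr
          exact mul_le_one₀ hy (norm_nonneg y) hy
      _ = 1 := one_mul 1
  refine le_of_tendsto' (((Φ.continuous.tendsto y).comp hey).norm.pow 2) fun n => ?_
  exact (φ.norm_apply_mul_sq_le_re_apply (he₀ n) (he₁ n) hy').trans (hc n)

theorem sq_opNorm_comp_le_of_tendsto_mul (hΦ₀ : ∀ x, 0 ≤ x → 0 ≤ Φ x) (hΦ₁ : ‖Φ‖ ≤ 1)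
    (he₀ : ∀ n, 0 ≤ e n) (he₁ : ∀ n, ‖e n‖ ≤ 1) (hc : ∀ n, (Φ (e n)).re ≤ c)
    {B : Type*} [NormedAddCommGroup B] [NormedSpace ℂ B] (j : B →L[ℂ] M) (hj : ‖j‖ ≤ 1)
    (he : ∀ b, Tendsto (fun n => e n * j b) l (𝓝 (j b))) :
    ‖Φ.comp j‖ ^ 2 ≤ c := by
  obtain ⟨n⟩ := l.nonempty_of_neBot
  have hc₀ : 0 ≤ c := (Complex.nonneg_iff.mp (hΦ₀ _ (he₀ n))).1.trans (hc n)
  have hunit : ∀ b, ‖b‖ = 1 → ‖Φ.comp j b‖ ≤ √c := fun b hb => by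
    have hjb : ‖j b‖ ≤ 1 := by simpa [hb] using j.le_of_opNorm_le hj b
    exact (Real.le_sqrt (norm_nonneg _) hc₀).mpr <|
      Φ.norm_apply_sq_le_of_tendsto_mul hΦ₀ hΦ₁ he₀ he₁ hc hjb (he b)
  exact (Real.le_sqrt (norm_nonneg _) hc₀).mp (opNorm_le_of_unit_norm (Real.sqrt_nonneg c) hunit)

end ContinuousLinearMap

end UnitalCStarAlgebra

theorem norm_iotaCLM_le (B : Type*) [NonUnitalCStarAlgebra B] : ‖iotaCLM B‖ ≤ 1 :=
  LinearMap.mkContinuous_norm_le _ zero_le_one _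

theorem isState_comp_of_relativelyProper_general
    {B : Type*} [NonUnitalCStarAlgebra B]
    [PartialOrder 𝓜(ℂ, B)] [StarOrderedRing 𝓜(ℂ, B)]
    (f : A →⋆ₙₐ[ℂ] 𝓜(ℂ, B))
    {ι : Type*} [Preorder ι] [Nonempty ι] [IsDirected ι (· ≤ ·)]
    (I : ι → A) (hI : IsApproxUnit I)
    (hf : ∀ b : B, Tendsto (fun n => ‖f (I n) * (b : 𝓜(ℂ, B)) - (b : 𝓜(ℂ, B))‖) atTop (𝓝 0) ∧
      Tendsto (fun n => ‖(b : 𝓜(ℂ, B)) * f (I n) - (b : 𝓜(ℂ, B))‖) atTop (𝓝 0))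
    (Φ : 𝓜(ℂ, B) →L[ℂ] ℂ) (hΦ : IsState Φ)
    (hΦB : ‖Φ.comp (iotaCLM B)‖ = 1) :
    ∃ ρ : A →L[ℂ] ℂ, (∀ a : A, ρ a = Φ (f a)) ∧ IsState ρ := by
  obtain ⟨hΦ₀, hΦ₁⟩ := hΦ
  obtain ⟨hI₀, hI₁, -⟩ := hI
  set ρ := Φ.comp f.toContinuousLinearMap
  have hρ_le : ‖ρ‖ ≤ 1 := (Φ.opNorm_comp_le _).trans <| by
    simpa [hΦ₁] using f.norm_toContinuousLinearMap_le
  have hΦB_le : ‖Φ.comp (iotaCLM B)‖ ^ 2 ≤ ‖ρ‖ :=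
    Φ.sq_opNorm_comp_le_of_tendsto_mul hΦ₀ hΦ₁.le (fun n => map_nonneg f (hI₀ n))
      (fun n => (NonUnitalStarAlgHom.norm_apply_le f _).trans (hI₁ n))
      (fun n => (Complex.re_le_norm _).trans ((ρ.le_opNorm_of_le (hI₁ n)).trans_eq (mul_one _)))
      (iotaCLM B) (norm_iotaCLM_le B) (fun b => tendsto_iff_norm_sub_tendsto_zero.mpr (hf b).1)
  refine ⟨ρ, fun a => rfl, fun a ha => hΦ₀ _ (map_nonneg f ha), le_antisymm hρ_le ?_⟩
  simpa [hΦB] using hΦB_le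

/-- If `f : A → 𝓜(B)` is a relatively proper `*`-homomorphism and `Φ` is a state on
`𝓜(B)` whose restriction to `B` has norm `1`, then `Φ ∘ f` is a state on `A`. -/
theorem isState_comp_of_relativelyProper
    {B : Type*} [NonUnitalCStarAlgebra B] [PartialOrder B] [StarOrderedRing B]
    [PartialOrder 𝓜(ℂ, B)] [StarOrderedRing 𝓜(ℂ, B)]
    (f : A →⋆ₙₐ[ℂ] 𝓜(ℂ, B))
    {ι : Type*} [Preorder ι] [Nonempty ι] [IsDirected ι (· ≤ ·)]
    (I : ι → A) (hI : IsApproxUnit I)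
    (hf : ∀ b : B, Tendsto (fun n => ‖f (I n) * (b : 𝓜(ℂ, B)) - (b : 𝓜(ℂ, B))‖) atTop (𝓝 0) ∧
      Tendsto (fun n => ‖(b : 𝓜(ℂ, B)) * f (I n) - (b : 𝓜(ℂ, B))‖) atTop (𝓝 0))
    (Φ : 𝓜(ℂ, B) →L[ℂ] ℂ) (hΦ : IsState Φ)
    (hΦB : ‖Φ.comp (iotaCLM B)‖ = 1) :
    ∃ ρ : A →L[ℂ] ℂ, (∀ a : A, ρ a = Φ (f a)) ∧ IsState ρ :=
  isState_comp_of_relativelyProper_general f I hI hf Φ hΦ hΦB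
end
end

section
/- For any C*-algebra A, the ℂ-linear span of the set cA of compactly supported bumps of A is norm dense in A. -/
open Filter Topology
open scoped ComplexOrder ENNReal NNReal MultiplierAlgebra

noncomputable section

variable {A : Type*} [NonUnitalCStarAlgebra A] [PartialOrder A] [StarOrderedRing A]

/-- A compactly supported bump: `0 ≤ a`, `‖a‖ = 1`, and there is `I_a` with `0 ≤ I_a`,
`‖I_a‖ ≤ 1` and `I_a * a = a`. -/
def IsBump (a : A) : Prop :=
  0 ≤ a ∧ ‖a‖ = 1 ∧ ∃ Ia : A, 0 ≤ Ia ∧ ‖Ia‖ ≤ 1 ∧ Ia * a = a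

/-- The `ℂ`-linear span of the compactly supported bumps is norm dense in `A`. -/
theorem dense_span_bumps :
    Dense ((Submodule.span ℂ {a : A | IsBump a} : Submodule ℂ A) : Set A) := by
  have key : ∀ a : A, 0 ≤ a →
      a ∈ closure ((Submodule.span ℂ {a : A | IsBump a} : Submodule ℂ A) : Set A) := by
    intro a ha
    rw [Metric.mem_closure_iff]
    intro ε hε
    set δ : ℝ := ε / 2 with hδdef
    have hδ0 : 0 < δ := half_pos hε
    have hsa : IsSelfAdjoint a := .of_nonneg ha
    set f : ℝ → ℝ := fun t => max (t - δ) 0 with hfdef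
    set g : ℝ → ℝ := fun t => min (max (t / δ) 0) 1 with hgdef
    have hfc : Continuous f := by fun_prop
    have hgc : Continuous g := by fun_prop
    have hf0 : f 0 = 0 := by simp [hfdef, hδ0.le]
    have hg0 : g 0 = 0 := by simp [hgdef]
    set b := cfcₙ f a with hbdef
    have hb_nonneg : 0 ≤ b := cfcₙ_nonneg fun x _ => le_max_right _ _
    have hI_nonneg : 0 ≤ cfcₙ g a := cfcₙ_nonneg fun x _ =>
      le_min (le_max_right _ _) zero_le_one
    have hI_norm : ‖cfcₙ g a‖ ≤ 1 := by
      apply norm_cfcₙ_le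
      intro x _
      rw [Real.norm_eq_abs, abs_of_nonneg (le_min (le_max_right _ _) zero_le_one)]
      exact min_le_right _ _
    have hIb : cfcₙ g a * b = b := by
      rw [hbdef, ← cfcₙ_mul g f a hgc.continuousOn hg0 hfc.continuousOn hf0]
      apply cfcₙ_congr
      intro t _
      rcases le_total t δ with h | h
      · have : f t = 0 := max_eq_right (sub_nonpos.mpr h)
        simp [this]
      · have : g t = 1 := min_eq_right (le_max_of_le_left ((one_le_div hδ0).mpr h))
        simp [this]
    have hdist : ‖a - b‖ ≤ δ := by
      have : a - b = cfcₙ (fun t => t - f t) a := by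
        rw [cfcₙ_sub (fun t : ℝ => t) f a continuousOn_id rfl hfc.continuousOn hf0, cfcₙ_id' ℝ a]
      rw [this]
      apply norm_cfcₙ_le
      intro x hx
      have hx0 : 0 ≤ x := quasispectrum_nonneg_of_nonneg a ha x hx
      rw [Real.norm_eq_abs]
      rcases le_total x δ with h | h
      · have : f x = 0 := max_eq_right (sub_nonpos.mpr h)
        rw [this, sub_zero, abs_of_nonneg hx0]
        exact h
      · have : f x = x - δ := max_eq_left (sub_nonneg.mpr h)
        rw [this, sub_sub_cancel, abs_of_nonneg hδ0.le]
    have hbmem : b ∈ (Submodule.span ℂ {a : A | IsBump a} : Submodule ℂ A) := by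
      by_cases hb0 : b = 0
      · rw [hb0]; exact Submodule.zero_mem _
      · have hnb : (0 : ℝ) < ‖b‖ := norm_pos_iff.mpr hb0
        have hbump : IsBump (‖b‖⁻¹ • b) := by
          refine ⟨smul_nonneg (by positivity) hb_nonneg, ?_, cfcₙ g a, hI_nonneg,
            hI_norm, ?_⟩
          · rw [norm_smul, Real.norm_eq_abs, abs_of_nonneg (by positivity),
              inv_mul_cancel₀ hnb.ne']
          · rw [mul_smul_comm, hIb]
        have : b = ‖b‖ • (‖b‖⁻¹ • b) := by
          rw [smul_smul, mul_inv_cancel₀ hnb.ne', one_smul]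
        rw [this]
        exact Submodule.smul_of_tower_mem _ _ (Submodule.subset_span hbump)
    exact ⟨b, hbmem, by
      rw [dist_eq_norm]
      calc ‖a - b‖ ≤ δ := hdist
        _ < ε := by rw [hδdef]; linarith⟩
  rw [dense_iff_closure_eq, ← Set.univ_subset_iff]
  have htop : (⊤ : Submodule ℂ A) ≤
      (Submodule.span ℂ {a : A | IsBump a}).topologicalClosure := by
    rw [← CStarAlgebra.span_nonneg, Submodule.span_le]
    intro x hx
    rw [SetLike.mem_coe, ← SetLike.mem_coe, Submodule.topologicalClosure_coe]
    exact key x hx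
  intro x _
  have := htop (Submodule.mem_top (x := x))
  rwa [← SetLike.mem_coe, Submodule.topologicalClosure_coe] at this
end
end

section
/- Let A be a C*-algebra, 𝓜(A) its multiplier algebra and ι : A → 𝓜(A) the canonical embedding. Let (b_j)_{j ∈ J} be a norm-bounded net in 𝓜(A) and b ∈ 𝓜(A). Then the following are equivalent: (i) for every a ∈ A, ‖ι(a)·(b_j − b)‖ → 0 and ‖(b_j − b)·ι(a)‖ → 0; (ii) for every a ∈ cA, ‖ι(a)·(b_j − b)‖ → 0 and ‖(b_j − b)·ι(a)‖ → 0. In other words, the restriction of the strict topology to bounded subsets of 𝓜(A) is induced by the seminorms b ↦ ‖ι(a)·b‖, b ↦ ‖b·ι(a)‖ for a ∈ cA. -/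
open Filter Topology
open scoped ComplexOrder ENNReal NNReal MultiplierAlgebra

noncomputable section

variable {A : Type*} [NonUnitalCStarAlgebra A] [PartialOrder A] [StarOrderedRing A]

/-!
For a bounded net `dⱼ`, the maps `m ↦ ‖dⱼ * m‖` are uniformly Lipschitz, so the set of `m` with
`‖dⱼ * m‖ → 0` is closed; it is also a right ideal. Hence it suffices that every `a ≠ 0` is a
norm limit of products `c * x` with `c` a bump. Take `e ≥ 0` from an approximate unit with
`e * a ≈ a`; the cut-off `(e - δ)₊` is `δ`-close to `e` and is fixed by the local unit
`min 1 (e / δ)`, so its normalisation is a bump. The left-hand seminorms follow by taking adjoints.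
-/

section BoundedNet

variable {R J : Type*} [NonUnitalSeminormedRing R] {l : Filter J} {d : J → R}

lemma isClosed_setOf_tendsto_norm_mul_left {C : ℝ} (hd : ∀ j, ‖d j‖ ≤ C) :
    IsClosed {m : R | Tendsto (fun j => ‖d j * m‖) l (𝓝 0)} := by
  refine (LipschitzWith.uniformEquicontinuous _ C.toNNReal fun j => ?_).equicontinuous
    |>.isClosed_setOfPred_tendsto continuous_const
  refine (lipschitzWith_one_norm.comp (lipschitzWith_smul (d j))).weaken ?_
  simpa [← NNReal.coe_le_coe] using (hd j).trans C.le_coe_toNNReal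

lemma isClosed_setOf_tendsto_norm_mul_right {C : ℝ} (hd : ∀ j, ‖d j‖ ≤ C) :
    IsClosed {m : R | Tendsto (fun j => ‖m * d j‖) l (𝓝 0)} := by
  refine (LipschitzWith.uniformEquicontinuous _ C.toNNReal fun j => ?_).equicontinuous
    |>.isClosed_setOfPred_tendsto continuous_const
  refine (lipschitzWith_one_norm.comp (lipschitzWith_smul (MulOpposite.op (d j)))).weaken ?_
  simpa [← NNReal.coe_le_coe, MulOpposite.norm_op] using (hd j).trans C.le_coe_toNNReal

lemma Filter.Tendsto.norm_mul_mul_right {m : R} (hm : Tendsto (fun j => ‖d j * m‖) l (𝓝 0))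
    (y : R) : Tendsto (fun j => ‖d j * (m * y)‖) l (𝓝 0) := by
  refine squeeze_zero (fun _ => norm_nonneg _) (fun j => ?_) (by simpa using hm.mul_const ‖y‖)
  rw [← mul_assoc]
  exact norm_mul_le _ _

lemma Filter.Tendsto.norm_mul_mul_left {m : R} (hm : Tendsto (fun j => ‖m * d j‖) l (𝓝 0))
    (y : R) : Tendsto (fun j => ‖y * m * d j‖) l (𝓝 0) := by
  refine squeeze_zero (fun _ => norm_nonneg _) (fun j => ?_) (by simpa using hm.const_mul ‖y‖)
  rw [mul_assoc]
  exact norm_mul_le _ _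

end BoundedNet

namespace DoubleCentralizer

omit [PartialOrder A] [StarOrderedRing A] in
lemma norm_coe (a : A) : ‖(a : 𝓜(ℂ, A))‖ = ‖a‖ := by
  rw [← norm_fst, coe_fst]
  exact ContinuousLinearMap.opNorm_mul_apply ℂ A a

omit [PartialOrder A] [StarOrderedRing A] in
lemma coe_zero : ((0 : A) : 𝓜(ℂ, A)) = 0 :=
  map_zero (coeHom (𝕜 := ℂ) (A := A))

omit [PartialOrder A] [StarOrderedRing A] in
lemma coe_mul (a b : A) : ((a * b : A) : 𝓜(ℂ, A)) = a * b :=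
  map_mul (coeHom (𝕜 := ℂ) (A := A)) a b

omit [PartialOrder A] [StarOrderedRing A] in
lemma continuous_coe : Continuous ((↑) : A → 𝓜(ℂ, A)) :=
  (AddMonoidHomClass.isometry_of_norm (coeHom (𝕜 := ℂ) (A := A)) norm_coe).continuous

end DoubleCentralizer

lemma exists_nonneg_mul_near (a : A) {ε : ℝ} (hε : 0 < ε) :
    ∃ e : A, 0 ≤ e ∧ ‖e * a - a‖ < ε := by
  have hl := CStarAlgebra.increasingApproximateUnit A
  have : NeBot (CStarAlgebra.approximateUnit A) := hl.neBot
  obtain ⟨e, he, hea⟩ := (hl.eventually_nonneg.and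
    ((hl.tendsto_mul_right a).eventually (Metric.ball_mem_nhds a hε))).exists
  exact ⟨e, he, by simpa [dist_eq_norm] using hea⟩

lemma exists_nonneg_near_with_local_unit {e : A} (he : 0 ≤ e) {δ : ℝ} (hδ : 0 < δ) :
    ∃ c I : A, 0 ≤ c ∧ ‖c - e‖ ≤ δ ∧ 0 ≤ I ∧ ‖I‖ ≤ 1 ∧ I * c = c := by
  have hspec : ∀ t ∈ quasispectrum ℝ e, 0 ≤ t := quasispectrum_nonneg_of_nonneg e he
  refine ⟨cfcₙ (fun t : ℝ => max 0 (t - δ)) e, cfcₙ (fun t : ℝ => min 1 (t / δ)) e,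
    cfcₙ_nonneg fun _ _ => le_max_left _ _, ?_,
    cfcₙ_nonneg fun t ht => le_min zero_le_one (div_nonneg (hspec t ht) hδ.le), ?_, ?_⟩
  · nth_rw 2 [← cfcₙ_id' ℝ e]
    rw [← cfcₙ_sub _ _ e (by fun_prop) (by simp [hδ.le])]
    refine norm_cfcₙ_le fun t ht => ?_
    rw [Real.norm_eq_abs, abs_le]
    constructor <;> cases max_cases 0 (t - δ) <;> linarith [hspec t ht]
  · refine norm_cfcₙ_le fun t ht => ?_
    rw [Real.norm_eq_abs, abs_of_nonneg (le_min zero_le_one (div_nonneg (hspec t ht) hδ.le))]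
    exact min_le_left _ _
  · rw [← cfcₙ_mul _ _ e (by fun_prop) (by simp) (by fun_prop) (by simp [hδ.le])]
    refine cfcₙ_congr fun t _ => ?_
    rcases le_total t δ with htδ | hδt
    · simp [max_eq_left (sub_nonpos.mpr htδ)]
    · simp [min_eq_left ((one_le_div hδ).mpr hδt)]

lemma isBump_inv_norm_smul {c I : A} (hc : 0 ≤ c) (hc₀ : c ≠ 0) (hI : 0 ≤ I) (hI₁ : ‖I‖ ≤ 1)
    (hIc : I * c = c) : IsBump (‖c‖⁻¹ • c) := by
  have hn : 0 < ‖c‖ := norm_pos_iff.mpr hc₀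
  refine ⟨smul_nonneg (inv_nonneg.mpr hn.le) hc, ?_, I, hI, hI₁, by rw [mul_smul_comm, hIc]⟩
  rw [norm_smul, Real.norm_eq_abs, abs_inv, abs_of_pos hn, inv_mul_cancel₀ hn.ne']

lemma exists_isBump_mul_near {a : A} (ha : a ≠ 0) {ε : ℝ} (hε : 0 < ε) :
    ∃ c x : A, IsBump c ∧ ‖a - c * x‖ < ε := by
  have hna : 0 < ‖a‖ := norm_pos_iff.mpr ha
  set η := min ε ‖a‖
  have hη : 0 < η := lt_min hε hna
  obtain ⟨e, he, hea⟩ := exists_nonneg_mul_near a (half_pos hη)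
  obtain ⟨c, I, hc, hce, hI, hI₁, hIc⟩ :=
    exists_nonneg_near_with_local_unit he (div_pos (half_pos hη) hna)
  have hca : ‖a - c * a‖ < η := calc
    ‖a - c * a‖ = ‖(c - e) * a + (e * a - a)‖ := by rw [← norm_neg]; congr 1; noncomm_ring
    _ ≤ ‖c - e‖ * ‖a‖ + ‖e * a - a‖ := (norm_add_le _ _).trans (by gcongr; exact norm_mul_le _ _)
    _ < η / 2 / ‖a‖ * ‖a‖ + η / 2 := add_lt_add_of_le_of_lt (by gcongr) hea
    _ = η := by field_simp; ring
  have hc₀ : c ≠ 0 := by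
    rintro rfl
    simp only [zero_mul, sub_zero] at hca
    exact hca.not_ge (min_le_right _ _)
  refine ⟨‖c‖⁻¹ • c, ‖c‖ • a, isBump_inv_norm_smul hc hc₀ hI hI₁ hIc, ?_⟩
  rw [smul_mul_smul_comm, inv_mul_cancel₀ (norm_ne_zero_iff.mpr hc₀), one_smul]
  exact hca.trans_le (min_le_left _ _)

lemma mem_closure_isBump_mul {a : A} (ha : a ≠ 0) :
    a ∈ closure {y : A | ∃ c x, IsBump c ∧ c * x = y} :=
  Metric.mem_closure_iff.mpr fun ε hε => by
    obtain ⟨c, x, hc, hcx⟩ := exists_isBump_mul_near ha hε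
    exact ⟨c * x, ⟨c, x, hc, rfl⟩, by rwa [dist_eq_norm]⟩

lemma mem_closure_mul_isBump {a : A} (ha : a ≠ 0) :
    a ∈ closure {y : A | ∃ x c, IsBump c ∧ x * c = y} := by
  have := map_mem_closure continuous_star (mem_closure_isBump_mul (star_ne_zero.mpr ha))
    (t := {y : A | ∃ x c, IsBump c ∧ x * c = y}) ?_
  · rwa [star_star] at this
  rintro _ ⟨c, x, hc, rfl⟩
  exact ⟨star x, c, hc, by rw [star_mul, hc.1.isSelfAdjoint.star_eq]⟩

theorem strict_topology_via_bumps_on_bounded_general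
    {J : Type*} [Preorder J]
    (b : J → 𝓜(ℂ, A)) (hb : ∃ Cb : ℝ, ∀ j, ‖b j‖ ≤ Cb) (b₀ : 𝓜(ℂ, A)) :
    ((∀ a : A, Tendsto (fun j => ‖(a : 𝓜(ℂ, A)) * (b j - b₀)‖) atTop (𝓝 0) ∧
        Tendsto (fun j => ‖(b j - b₀) * (a : 𝓜(ℂ, A))‖) atTop (𝓝 0)) ↔
      (∀ a : A, IsBump a →
        Tendsto (fun j => ‖(a : 𝓜(ℂ, A)) * (b j - b₀)‖) atTop (𝓝 0) ∧
        Tendsto (fun j => ‖(b j - b₀) * (a : 𝓜(ℂ, A))‖) atTop (𝓝 0))) := by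
  refine ⟨fun H a _ => H a, fun H a => ?_⟩
  rcases eq_or_ne a 0 with rfl | ha
  · simp [DoubleCentralizer.coe_zero, tendsto_const_nhds]
  obtain ⟨Cb, hCb⟩ := hb
  have hbound (j : J) : ‖b j - b₀‖ ≤ Cb + ‖b₀‖ := (norm_sub_le _ _).trans (by linarith [hCb j])
  constructor
  · refine closure_minimal ?_ ((isClosed_setOf_tendsto_norm_mul_right hbound).preimage
      DoubleCentralizer.continuous_coe) (mem_closure_mul_isBump ha)
    rintro _ ⟨x, c, hc, rfl⟩
    simpa only [Set.mem_preimage, Set.mem_ofPred_eq, DoubleCentralizer.coe_mul]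
      using (H c hc).1.norm_mul_mul_left x
  · refine closure_minimal ?_ ((isClosed_setOf_tendsto_norm_mul_left hbound).preimage
      DoubleCentralizer.continuous_coe) (mem_closure_isBump_mul ha)
    rintro _ ⟨c, x, hc, rfl⟩
    simpa only [Set.mem_preimage, Set.mem_ofPred_eq, DoubleCentralizer.coe_mul]
      using (H c hc).2.norm_mul_mul_right x

/-- On norm-bounded nets in the multiplier algebra, the strict topology is induced by the
seminorms coming from compactly supported bumps alone. -/
theorem strict_topology_via_bumps_on_bounded
    {J : Type*} [Preorder J] [Nonempty J] [IsDirected J (· ≤ ·)]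
    (b : J → 𝓜(ℂ, A)) (hb : ∃ Cb : ℝ, ∀ j, ‖b j‖ ≤ Cb) (b₀ : 𝓜(ℂ, A)) :
    ((∀ a : A, Tendsto (fun j => ‖(a : 𝓜(ℂ, A)) * (b j - b₀)‖) atTop (𝓝 0) ∧
        Tendsto (fun j => ‖(b j - b₀) * (a : 𝓜(ℂ, A))‖) atTop (𝓝 0)) ↔
      (∀ a : A, IsBump a →
        Tendsto (fun j => ‖(a : 𝓜(ℂ, A)) * (b j - b₀)‖) atTop (𝓝 0) ∧
        Tendsto (fun j => ‖(b j - b₀) * (a : 𝓜(ℂ, A))‖) atTop (𝓝 0))) :=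
  strict_topology_via_bumps_on_bounded_general b hb b₀
end
end

section
/- Let A be a C*-algebra and φ a compactly supported state on A, i.e. there exists a nonzero a ∈ A with φ(a) = ‖a‖. Then there exists a compactly supported bump a' ∈ cA with φ(a') = 1. -/
open Filter Topology
open scoped ComplexOrder ENNReal NNReal MultiplierAlgebra

noncomputable section

variable {A : Type*} [NonUnitalCStarAlgebra A] [PartialOrder A] [StarOrderedRing A]

/-! Replacing `a` by the positive part of its real part and rescaling yields `0 ≤ c` with
`‖c‖ ≤ 1` and `φ c = 1`. A positive contractive functional that is `1` on such a `c` only sees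
the part of the spectrum of `c` near `1`: if `r` is a ramp vanishing up to `3/4` and equal to `1`
from `1` on, then `4 c - r(c)` is positive of norm at most `3`, so `φ (r c) ≥ 4 - 3 = 1`, which
forces `φ (r c) = 1 = ‖r c‖`. A wider ramp `I`, equal to `1` wherever `r` is nonzero, gives
`I(c) r(c) = r(c)`. -/

namespace Complex

lemma le_of_nonneg_of_norm_le {z : ℂ} {r : ℝ} (hz : 0 ≤ z) (hzr : ‖z‖ ≤ r) : z ≤ r := by
  rw [eq_coe_norm_of_nonneg hz]
  exact_mod_cast hzr

lemma eq_of_le_of_norm_le {z : ℂ} {r : ℝ} (hrz : (r : ℂ) ≤ z) (hzr : ‖z‖ ≤ r) : z = r := by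
  obtain ⟨hre, him⟩ := le_def.mp hrz
  apply ext
  · simp only [ofReal_re] at hre ⊢
    linarith [re_le_norm z]
  · simpa using him.symm

end Complex

def ramp (t s : ℝ) : ℝ := min 1 (max 0 (4 * (s - t)))

lemma continuous_ramp (t : ℝ) : Continuous (ramp t) := by
  unfold ramp; fun_prop

lemma ramp_nonneg (t s : ℝ) : 0 ≤ ramp t s := le_min zero_le_one (le_max_left _ _)

lemma ramp_le_one (t s : ℝ) : ramp t s ≤ 1 := min_le_left _ _

lemma ramp_zero {t : ℝ} (ht : 0 ≤ t) : ramp t 0 = 0 := by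
  simp [ramp, ht]

lemma ramp_mul_ramp {t t' : ℝ} (htt' : t + 1 / 4 ≤ t') (s : ℝ) :
    ramp t s * ramp t' s = ramp t' s := by
  rcases le_or_gt s t' with hs | hs
  · have : ramp t' s = 0 := by
      rw [ramp, max_eq_left (by linarith), min_eq_right zero_le_one]
    simp [this]
  · have : ramp t s = 1 := min_eq_left (le_max_of_le_right (by linarith))
    simp [this]

lemma sub_ramp_mem_Icc {s : ℝ} (hs : s ∈ Set.Icc (0 : ℝ) 1) :
    4 * s - ramp (3 / 4) s ∈ Set.Icc (0 : ℝ) 3 := by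
  obtain ⟨hs0, hs1⟩ := hs
  have hlow : 4 * (s - 3 / 4) ≤ ramp (3 / 4) s := le_min (by linarith) (le_max_right _ _)
  have hup : ramp (3 / 4) s ≤ 4 * s :=
    (min_le_right _ _).trans (max_le (by linarith) (by linarith))
  constructor <;> linarith

lemma norm_cfcₙ_ramp_le_one {B : Type*} [NonUnitalCStarAlgebra B] (t : ℝ) (c : B) :
    ‖cfcₙ (ramp t) c‖ ≤ 1 :=
  norm_cfcₙ_le fun s _ => by
    rw [Real.norm_of_nonneg (ramp_nonneg t s)]
    exact ramp_le_one t s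

lemma cfcₙ_ramp_mul_cfcₙ_ramp {B : Type*} [NonUnitalCStarAlgebra B] (c : B) :
    cfcₙ (ramp (1 / 2)) c * cfcₙ (ramp (3 / 4)) c = cfcₙ (ramp (3 / 4)) c := by
  rw [← cfcₙ_mul _ _ c (continuous_ramp _).continuousOn (ramp_zero (by norm_num))
    (continuous_ramp _).continuousOn (ramp_zero (by norm_num))]
  exact cfcₙ_congr fun s _ => ramp_mul_ramp (by norm_num) s

lemma isBump_cfcₙ_ramp {c : A} (hc : ‖cfcₙ (ramp (3 / 4)) c‖ = 1) :
    IsBump (cfcₙ (ramp (3 / 4)) c) :=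
  ⟨cfcₙ_nonneg fun s _ => ramp_nonneg _ s, hc, cfcₙ (ramp (1 / 2)) c,
    cfcₙ_nonneg fun s _ => ramp_nonneg _ s, norm_cfcₙ_ramp_le_one _ c,
    cfcₙ_ramp_mul_cfcₙ_ramp c⟩

lemma mem_Icc_norm_of_mem_quasispectrum {c : A} (hc : 0 ≤ c) {s : ℝ}
    (hs : s ∈ quasispectrum ℝ c) : s ∈ Set.Icc 0 ‖c‖ := by
  refine ⟨quasispectrum_nonneg_of_nonneg c hc s hs, ?_⟩
  have := norm_apply_le_norm_cfcₙ (fun x : ℝ => x) c hs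
  rw [cfcₙ_id' ℝ c, Real.norm_eq_abs] at this
  exact (le_abs_self s).trans this

open ComplexStarModule

lemma norm_posPart_realPart_le {B : Type*} [NonUnitalCStarAlgebra B] (a : B) :
    ‖(ℜ a : B)⁺‖ ≤ ‖a‖ :=
  (CStarAlgebra.norm_posPart_le _).trans (realPart.norm_le a)

namespace PositiveLinearMap

variable (f : A →ₚ[ℂ] ℂ)

lemma apply_realPart (a : A) : f (ℜ a : A) = ((f a).re : ℂ) := by
  rw [realPart_apply_coe, map_smul_of_tower, map_add, map_star, Complex.star_def,
    Complex.add_conj, Complex.real_smul]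
  push_cast
  ring

lemma apply_posPart_realPart_eq_norm (hf : ∀ x, ‖f x‖ ≤ ‖x‖) {a : A} (ha : f a = ‖a‖) :
    f (ℜ a : A)⁺ = ‖a‖ := by
  have hle : (‖a‖ : ℂ) ≤ f (ℜ a : A)⁺ := by
    calc (‖a‖ : ℂ) = f (ℜ a : A) := by rw [apply_realPart, ha, Complex.ofReal_re]
      _ ≤ f (ℜ a : A)⁺ := OrderHomClass.mono f (CFC.le_posPart (ℜ a).2)
  exact Complex.eq_of_le_of_norm_le hle ((hf _).trans (norm_posPart_realPart_le a))

lemma exists_nonneg_norm_le_one_apply_eq_one (hf : ∀ x, ‖f x‖ ≤ ‖x‖) {a : A} (ha₀ : a ≠ 0)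
    (ha : f a = ‖a‖) : ∃ c : A, 0 ≤ c ∧ ‖c‖ ≤ 1 ∧ f c = 1 := by
  have hna : 0 < ‖a‖ := norm_pos_iff.mpr ha₀
  refine ⟨‖a‖⁻¹ • (ℜ a : A)⁺, smul_nonneg (inv_nonneg.mpr hna.le) (CFC.posPart_nonneg _), ?_, ?_⟩
  · rw [norm_smul, Real.norm_of_nonneg (inv_nonneg.mpr hna.le), inv_mul_le_one₀ hna]
    exact norm_posPart_realPart_le a
  · rw [map_smul_of_tower, apply_posPart_realPart_eq_norm f hf ha, Complex.real_smul,
      ← Complex.ofReal_mul, inv_mul_cancel₀ hna.ne', Complex.ofReal_one]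

lemma apply_cfcₙ_ramp_eq_one (hf : ∀ x, ‖f x‖ ≤ ‖x‖) {c : A}
    (hc₀ : 0 ≤ c) (hc₁ : ‖c‖ ≤ 1) (hfc : f c = 1) : f (cfcₙ (ramp (3 / 4)) c) = 1 := by
  set b := cfcₙ (ramp (3 / 4)) c
  have hspec : ∀ s ∈ quasispectrum ℝ c, s ∈ Set.Icc (0 : ℝ) 1 := fun s hs =>
    Set.Icc_subset_Icc_right hc₁ (mem_Icc_norm_of_mem_quasispectrum hc₀ hs)
  have hy : cfcₙ (fun s => 4 * s - ramp (3 / 4) s) c = (4 : ℝ) • c - b := by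
    rw [cfcₙ_sub (fun s => 4 * s) (ramp (3 / 4)) c (by fun_prop) (by simp)
      (continuous_ramp _).continuousOn (ramp_zero (by norm_num)), cfcₙ_const_mul _ _ c,
      cfcₙ_id' ℝ c]
  have hy₀ : 0 ≤ (4 : ℝ) • c - b :=
    hy ▸ cfcₙ_nonneg fun s hs => (sub_ramp_mem_Icc (hspec s hs)).1
  have hy₃ : ‖(4 : ℝ) • c - b‖ ≤ 3 := hy ▸ norm_cfcₙ_le fun s hs => by
    obtain ⟨h0, h3⟩ := sub_ramp_mem_Icc (hspec s hs)
    rwa [Real.norm_of_nonneg h0]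
  have hfy : f ((4 : ℝ) • c - b) ≤ (3 : ℝ) :=
    Complex.le_of_nonneg_of_norm_le (f.map_nonneg hy₀) ((hf _).trans hy₃)
  refine Complex.eq_of_le_of_norm_le ?_ ((hf b).trans (norm_cfcₙ_ramp_le_one _ c))
  rw [map_sub, map_smul_of_tower, hfc] at hfy
  calc ((1 : ℝ) : ℂ) = (4 : ℝ) • (1 : ℂ) - (3 : ℝ) := by norm_num
    _ ≤ f b := sub_le_comm.mp hfy

end PositiveLinearMap

/-- A compactly supported state (one attaining its norm on `A`) attains the value `1`
on some compactly supported bump. -/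
theorem exists_bump_of_compactlySupported (φ : A →L[ℂ] ℂ) (hφ : IsState φ)
    (a : A) (ha : a ≠ 0) (hnorm : φ a = (‖a‖ : ℂ)) :
    ∃ a' : A, IsBump a' ∧ φ a' = 1 := by
  let f : A →ₚ[ℂ] ℂ := .mk₀ φ.toLinearMap hφ.1
  have hf : ∀ x, ‖f x‖ ≤ ‖x‖ := fun x =>
    show ‖φ x‖ ≤ ‖x‖ by simpa [hφ.2] using φ.le_opNorm x
  obtain ⟨c, hc₀, hc₁, hfc⟩ := f.exists_nonneg_norm_le_one_apply_eq_one hf ha hnorm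
  have hfb := f.apply_cfcₙ_ramp_eq_one hf hc₀ hc₁ hfc
  refine ⟨_, isBump_cfcₙ_ramp (le_antisymm (norm_cfcₙ_ramp_le_one _ c) ?_), hfb⟩
  simpa [hfb] using hf (cfcₙ (ramp (3 / 4)) c)
end
end

section
/- Let A be a C*-algebra admitting an almost idempotent approximate identity: a net (I_n)_{n ∈ N} in A with 0 ≤ I_n, ‖I_n‖ ≤ 1, ‖I_n·a − a‖ → 0 and ‖a·I_n − a‖ → 0 for every a ∈ A, and I_m·I_n = I_n whenever m ≥ n. Then the compactly supported states are weak-* dense in the state space of A: for every state φ on A, every finite set S ⊆ A, and every ε > 0, there exists a compactly supported state φ' on A with |φ(a) − φ'(a)| < ε for all a ∈ S. -/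
/-!
Since `I n * I n = I n` and `0 ≤ I n`, every `I n` is a projection `p`. For a positive functional
`φ`, Cauchy–Schwarz in its GNS space gives `‖φ (p * a * p)‖ ≤ ‖a‖ * ‖φ p‖`, so the compression
`a ↦ φ (p * a * p) / φ p` is a state, and it attains its norm at `p`. Along the approximate unit,
`I n * a * I n → a` and `φ (I n) → ‖φ‖ = 1`, so the compressions by `I n` converge pointwise to `φ`.
-/

open Filter Topology
open scoped ComplexOrder ENNReal NNReal MultiplierAlgebra

noncomputable section

variable {A : Type*} [NonUnitalCStarAlgebra A] [PartialOrder A] [StarOrderedRing A]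

open scoped InnerProductSpace

theorem PositiveLinearMap.norm_apply_mul_mul_le (f : A →ₚ[ℂ] ℂ) {c : A}
    (hc : IsStarProjection c) (a : A) : ‖f (c * a * c)‖ ≤ ‖a‖ * ‖f c‖ := by
  set x := f.toPreGNS c
  have hx : ‖f c‖ = ‖x‖ ^ 2 := by
    have : ((‖x‖ ^ 2 : ℝ) : ℂ) = f c := by
      rw [Complex.ofReal_pow, preGNS_norm_sq]
      simp [x, hc.isSelfAdjoint.star_eq, hc.isIdempotentElem.eq]
    rw [← this, Complex.norm_real, Real.norm_of_nonneg (by positivity)]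
  have hmul : ‖f.leftMulMapPreGNS a x‖ ≤ ‖a‖ * ‖x‖ :=
    (f.leftMulMapPreGNS a).le_of_opNorm_le (LinearMap.mkContinuous_norm_le _ (norm_nonneg a) _) x
  calc ‖f (c * a * c)‖ = ‖⟪x, f.leftMulMapPreGNS a x⟫_ℂ‖ := by
        simp [x, preGNS_inner_def, hc.isSelfAdjoint.star_eq, mul_assoc]
    _ ≤ ‖x‖ * ‖f.leftMulMapPreGNS a x‖ := norm_inner_le_norm _ _
    _ ≤ ‖x‖ * (‖a‖ * ‖x‖) := by gcongr
    _ = ‖a‖ * ‖f c‖ := by rw [hx]; ring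

theorem IsStarProjection.norm_eq_one {E : Type*} [NonUnitalNormedRing E] [StarRing E]
    [CStarRing E] {p : E} (hp : IsStarProjection p) (hp0 : p ≠ 0) : ‖p‖ = 1 := by
  have : ‖p‖ * (‖p‖ - 1) = 0 := by
    simp [mul_sub, ← CStarRing.norm_star_mul_self, hp.isSelfAdjoint.star_eq, hp.isIdempotentElem.eq]
  simpa [norm_ne_zero_iff.mpr hp0, sub_eq_zero] using this

section Compression

variable {B : Type*} [NonUnitalNormedRing B] [NormedSpace ℂ B] [IsScalarTower ℂ B B]
  [SMulCommClass ℂ B B]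

def compression (φ : B →L[ℂ] ℂ) (c : B) : B →L[ℂ] ℂ :=
  (φ c)⁻¹ • φ.comp (ContinuousLinearMap.mulLeftRight ℂ B c c)

theorem compression_apply (φ : B →L[ℂ] ℂ) (c a : B) :
    compression φ c a = (φ c)⁻¹ * φ (c * a * c) := rfl

theorem compression_apply_self {φ : B →L[ℂ] ℂ} {c : B} (hc : IsIdempotentElem c)
    (hφc : φ c ≠ 0) : compression φ c c = 1 := by
  rw [compression_apply, hc.eq, hc.eq, inv_mul_cancel₀ hφc]

end Compression

theorem isState_compression {φ : A →L[ℂ] ℂ} {c : A} (hφ : ∀ a, 0 ≤ a → 0 ≤ φ a)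
    (hc : IsStarProjection c) (hφc : φ c ≠ 0) : IsState (compression φ c) := by
  have hφc_real : φ c = (‖φ c‖ : ℂ) := Complex.eq_coe_norm_of_nonneg (hφ c hc.nonneg)
  have hle (a : A) : ‖compression φ c a‖ ≤ ‖a‖ := by
    rw [compression_apply, norm_mul, norm_inv, inv_mul_le_iff₀ (norm_pos_iff.mpr hφc), mul_comm]
    exact (PositiveLinearMap.mk₀ φ.toLinearMap hφ).norm_apply_mul_mul_le hc a
  refine ⟨fun a ha => ?_,
    le_antisymm ((compression φ c).opNorm_le_bound zero_le_one (by simpa using hle)) ?_⟩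
  · rw [compression_apply, hφc_real, ← Complex.ofReal_inv]
    refine mul_nonneg (by exact_mod_cast inv_nonneg.mpr (norm_nonneg _)) (hφ _ ?_)
    simpa [hc.isSelfAdjoint.star_eq] using star_left_conjugate_nonneg ha c
  · calc 1 = ‖compression φ c c‖ := by
          rw [compression_apply_self hc.isIdempotentElem hφc, norm_one]
      _ ≤ ‖compression φ c‖ * ‖c‖ := (compression φ c).le_opNorm c
      _ = ‖compression φ c‖ := by
        rw [hc.norm_eq_one (by rintro rfl; exact hφc (map_zero φ)), mul_one]

section ApproxUnit

variable {ι : Type*} [Preorder ι]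

theorem IsApproxUnit.tendsto_mul_mul {B : Type*} [NonUnitalCStarAlgebra B] [PartialOrder B]
    {I : ι → B} (hI : IsApproxUnit I) (a : B) :
    Tendsto (fun n => I n * a * I n) atTop (𝓝 a) := by
  rw [tendsto_iff_norm_sub_tendsto_zero]
  refine squeeze_zero (fun n => norm_nonneg _) (fun n => ?_)
    (by simpa using ((hI.2.2 a).2.add (hI.2.2 a).1))
  calc ‖I n * a * I n - a‖ = ‖I n * (a * I n - a) + (I n * a - a)‖ := by noncomm_ring
    _ ≤ ‖I n‖ * ‖a * I n - a‖ + ‖I n * a - a‖ :=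
      (norm_add_le _ _).trans (add_le_add_left (norm_mul_le _ _) _)
    _ ≤ ‖a * I n - a‖ + ‖I n * a - a‖ := by
      gcongr; exact mul_le_of_le_one_left (norm_nonneg _) (hI.2.1 n)

variable {I : ι → A}

theorem IsApproxUnit.tendsto_apply_of_isStarProjection (hI : IsApproxUnit I)
    (hproj : ∀ n, IsStarProjection (I n)) {φ : A →L[ℂ] ℂ} (hφ : ∀ a, 0 ≤ a → 0 ≤ φ a) :
    Tendsto (fun n => φ (I n)) atTop (𝓝 (‖φ‖ : ℂ)) := by
  suffices h : Tendsto (fun n => ‖φ (I n)‖) atTop (𝓝 ‖φ‖) from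
    ((Complex.continuous_ofReal.tendsto _).comp h).congr
      fun n => (Complex.eq_coe_norm_of_nonneg (hφ _ (hproj n).nonneg)).symm
  refine tendsto_order.2 ⟨fun r hr => ?_, fun r hr => Eventually.of_forall fun n => ?_⟩
  · obtain ⟨a, ha, hra⟩ := φ.exists_lt_apply_of_lt_opNorm hr
    have hlim := (φ.continuous.tendsto a).norm.comp (hI.tendsto_mul_mul a)
    filter_upwards [hlim.eventually_const_lt hra] with n hn
    calc r < ‖φ (I n * a * I n)‖ := hn
      _ ≤ ‖a‖ * ‖φ (I n)‖ :=
        (PositiveLinearMap.mk₀ φ.toLinearMap hφ).norm_apply_mul_mul_le (hproj n) a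
      _ ≤ ‖φ (I n)‖ := mul_le_of_le_one_left (norm_nonneg _) ha.le
  · calc ‖φ (I n)‖ ≤ ‖φ‖ * ‖I n‖ := φ.le_opNorm _
      _ ≤ ‖φ‖ := mul_le_of_le_one_right (norm_nonneg _) (hI.2.1 n)
      _ < r := hr

theorem IsApproxUnit.tendsto_apply_of_isState (hI : IsApproxUnit I)
    (hproj : ∀ n, IsStarProjection (I n)) {φ : A →L[ℂ] ℂ} (hφ : IsState φ) :
    Tendsto (fun n => φ (I n)) atTop (𝓝 1) := by
  simpa [hφ.2] using hI.tendsto_apply_of_isStarProjection hproj hφ.1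

theorem IsApproxUnit.tendsto_compression_apply (hI : IsApproxUnit I)
    (hproj : ∀ n, IsStarProjection (I n)) {φ : A →L[ℂ] ℂ} (hφ : IsState φ) (a : A) :
    Tendsto (fun n => compression φ (I n) a) atTop (𝓝 (φ a)) := by
  simpa [compression_apply] using ((hI.tendsto_apply_of_isState hproj hφ).inv₀ one_ne_zero).mul
    ((φ.continuous.tendsto a).comp (hI.tendsto_mul_mul a))

end ApproxUnit

/-- If `A` has an almost idempotent approximate identity, the compactly supported states
are weak-* dense in the state space. -/
theorem compactlySupported_states_weakStar_dense
    {ι : Type*} [Preorder ι] [Nonempty ι] [IsDirected ι (· ≤ ·)]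
    (I : ι → A) (hI : IsApproxUnit I)
    (hidem : ∀ m n : ι, n ≤ m → I m * I n = I n)
    (φ : A →L[ℂ] ℂ) (hφ : IsState φ) (S : Finset A) (ε : ℝ) (hε : 0 < ε) :
    ∃ φ' : A →L[ℂ] ℂ, IsState φ' ∧ (∃ a : A, a ≠ 0 ∧ φ' a = (‖a‖ : ℂ)) ∧
      ∀ a ∈ S, ‖φ a - φ' a‖ < ε := by
  have hproj (n : ι) : IsStarProjection (I n) :=
    ⟨hidem n n le_rfl, IsSelfAdjoint.of_nonneg (hI.1 n)⟩
  have hφI_ne : ∀ᶠ n in atTop, φ (I n) ≠ 0 :=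
    (hI.tendsto_apply_of_isState hproj hφ).eventually_ne one_ne_zero
  have hclose : ∀ᶠ n in atTop, ∀ a ∈ S, ‖φ a - compression φ (I n) a‖ < ε :=
    (eventually_all_finset S).2 fun a _ => by
      simpa [dist_eq_norm'] using
        (hI.tendsto_compression_apply hproj hφ a).eventually (Metric.ball_mem_nhds _ hε)
  obtain ⟨n, hn, hS⟩ := (hφI_ne.and hclose).exists
  have hIn : I n ≠ 0 := by rintro h; exact hn (by rw [h, map_zero])
  refine ⟨compression φ (I n), isState_compression hφ.1 (hproj n) hn, ⟨I n, hIn, ?_⟩, hS⟩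
  rw [compression_apply_self (hproj n).isIdempotentElem hn, (hproj n).norm_eq_one hIn,
    Complex.ofReal_one]
end
end
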